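/- arXiv:2402.02832 — 8 statements merged into one kernel-verified Lean document; each statement's English description precedes it below -/
import Mathlib

section
/- Let r, a be coprime integers with 0 ≤ a < r and r ≥ 1. If G ∈ GL₂(ℤ) has determinant -1, and a cone σ in ℚ² has primitive ray generators forming a matrix with Hermite normal form [[1, a],[0, r]], then the cone Gσ has Hermite normal form [[1, a*],[0, r]] where a·a* ≡ 1 (mod r). -/
abbrev Z2 := ℤ × ℤ
abbrev Q2 := ℚ × ℚ

/-- The canonical embedding of lattice points into `ℚ × ℚ`. -/
def toQ (v : Z2) : Q2 := ((v.1 : ℚ), (v.2 : ℚ))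

/-- Pairing of a dual lattice vector with a rational point. -/
def dotQ (u : Z2) (x : Q2) : ℚ := (u.1 : ℚ) * x.1 + (u.2 : ℚ) * x.2

/-- A lattice vector is primitive if its coordinates are coprime. -/
def IsPrimitive (v : Z2) : Prop := Int.gcd v.1 v.2 = 1

/-- Action of an integer matrix on `ℚ × ℚ`. -/
def applyM (G : Matrix (Fin 2) (Fin 2) ℤ) (x : Q2) : Q2 :=
  ((G 0 0 : ℚ) * x.1 + (G 0 1 : ℚ) * x.2, (G 1 0 : ℚ) * x.1 + (G 1 1 : ℚ) * x.2)

/-- Action of an integer matrix on `ℤ × ℤ`. -/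
def applyZ (G : Matrix (Fin 2) (Fin 2) ℤ) (v : Z2) : Z2 :=
  (G 0 0 * v.1 + G 0 1 * v.2, G 1 0 * v.1 + G 1 1 * v.2)

/-- The convex hull in `ℚ²` of a finite set of lattice points. -/
def hull (V : Finset Z2) : Set Q2 := convexHull ℚ (toQ '' (V : Set Z2))

/-- `V` is the vertex set of a Fano polygon: the origin is in the strict interior of the
convex hull, every vertex is primitive, and the points of `V` are exactly the vertices
(extreme points) of the hull. -/
def IsFanoPolygon (V : Finset Z2) : Prop :=
  (0 : Q2) ∈ interior (hull V) ∧
  (∀ v ∈ V, IsPrimitive v) ∧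
  toQ '' (V : Set Z2) = Set.extremePoints ℚ (hull V)

/-- `E` is the edge of `P` with primitive inner normal `u` and height `h`:
`u ≥ -h` holds on `P`, with equality exactly on `E`, and `E` has more than one point. -/
def IsEdge (P E : Set Q2) (u : Z2) (h : ℤ) : Prop :=
  IsPrimitive u ∧ 0 < h ∧
  (∀ x ∈ P, -(h : ℚ) ≤ dotQ u x) ∧
  E = {x ∈ P | dotQ u x = -(h : ℚ)} ∧
  ∃ a b, a ∈ E ∧ b ∈ E ∧ a ≠ b

/-- The lattice length of an edge: the number of lattice points on it minus one. -/
noncomputable def latticeLength (E : Set Q2) : ℕ :=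
  Set.ncard {v : Z2 | toQ v ∈ E} - 1

/-- An edge is long if its lattice length is at least its height. -/
def IsLongEdge (P E : Set Q2) (u : Z2) (h : ℤ) : Prop :=
  IsEdge P E u h ∧ h ≤ (latticeLength E : ℤ)

/-- `P` has a non-empty basket of R-singularities: some edge has lattice length
not a multiple of its height. -/
def HasRsing (P : Set Q2) : Prop :=
  ∃ E u h, IsEdge P E u h ∧ ¬ (h ∣ (latticeLength E : ℤ))

/-- Central symmetry: `P = -P`. -/
def CentSym (P : Set Q2) : Prop := ∀ x, x ∈ P ↔ -x ∈ P

/-- `G` is a lattice automorphism of `P`. -/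
def IsAut (G : Matrix (Fin 2) (Fin 2) ℤ) (P : Set Q2) : Prop :=
  IsUnit G.det ∧ applyM G '' P = P

/-- `P` admits a lattice automorphism of order 3. -/
def ThreeSym (P : Set Q2) : Prop := ∃ G, IsAut G P ∧ G ^ 3 = 1 ∧ G ≠ 1

/-- `P` is symmetric: the fixed-point set of its automorphism group is `{0}`. -/
def SymmetricPolygon (P : Set Q2) : Prop :=
  {x : Q2 | ∀ G, IsAut G P → applyM G x = x} = {0}

/-- The matrix whose columns are `v₀` and `v₁`. -/
def colMat (v₀ v₁ : Z2) : Matrix (Fin 2) (Fin 2) ℤ := !![v₀.1, v₁.1; v₀.2, v₁.2]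

/-- The cone with primitive ray generators `v₀, v₁` (anticlockwise) has (row-style)
Hermite normal form `[[1, a], [0, r]]`. -/
def HNFis (v₀ v₁ : Z2) (a r : ℤ) : Prop :=
  ∃ U : Matrix (Fin 2) (Fin 2) ℤ, U.det = 1 ∧ colMat v₀ v₁ = U * !![1, a; 0, r]

lemma colMat_applyZ (G : Matrix (Fin 2) (Fin 2) ℤ) (v₀ v₁ : Z2) :
    colMat (applyZ G v₀) (applyZ G v₁) = G * colMat v₀ v₁ := by
  ext i j
  fin_cases i <;> fin_cases j <;> simp [colMat, applyZ, Matrix.mul_apply, Fin.sum_univ_two]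

lemma colMat_swap (v₀ v₁ : Z2) : colMat v₁ v₀ = colMat v₀ v₁ * !![0, 1; 1, 0] := by
  ext i j
  fin_cases i <;> fin_cases j <;> simp [colMat]

lemma exists_emod_inverse {a r : ℤ} (hr : 0 < r) (hcop : Int.gcd a r = 1) :
    ∃ a' : ℤ, 0 ≤ a' ∧ a' < r ∧ r ∣ a * a' - 1 := by
  obtain ⟨u, v, huv⟩ := Int.isCoprime_iff_gcd_eq_one.mpr hcop
  refine ⟨u % r, Int.emod_nonneg u hr.ne', Int.emod_lt_of_pos u hr, Int.ModEq.dvd ?_⟩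
  have hau : a * u ≡ 1 [ZMOD r] := Int.modEq_iff_dvd.mpr ⟨v, by linarith⟩
  exact (((Int.mod_modEq u r).mul_left a).trans hau).symm

/-- Swapping the columns of `[[1, a], [0, r]]` gives, up to a factor of determinant `-1`,
the normal form `[[1, a'], [0, r]]` with `a'` inverse to `a` modulo `r`. -/
lemma exists_det_neg_one_hnf_swap {a a' r : ℤ} (h : r ∣ a * a' - 1) :
    ∃ M : Matrix (Fin 2) (Fin 2) ℤ, M.det = -1 ∧
      !![1, a; 0, r] * !![0, 1; 1, 0] = M * !![1, a'; 0, r] := by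
  obtain ⟨k, hk⟩ := h
  refine ⟨!![a, -k; r, -a'], by rw [Matrix.det_fin_two_of]; linarith, ?_⟩
  ext i j
  fin_cases i <;> fin_cases j <;> simp [Matrix.mul_apply, Fin.sum_univ_two] <;> linarith

lemma HNFis.applyZ_swap {v₀ v₁ : Z2} {a a' r : ℤ} (hH : HNFis v₀ v₁ a r)
    {G : Matrix (Fin 2) (Fin 2) ℤ} (hG : G.det = -1) (h : r ∣ a * a' - 1) :
    HNFis (applyZ G v₁) (applyZ G v₀) a' r := by
  obtain ⟨U, hU, hEq⟩ := hH
  obtain ⟨M, hM, hswap⟩ := exists_det_neg_one_hnf_swap h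
  refine ⟨G * U * M, by rw [Matrix.det_mul, Matrix.det_mul, hG, hU, hM]; norm_num, ?_⟩
  rw [colMat_applyZ, colMat_swap, hEq, Matrix.mul_assoc U, hswap]
  simp only [Matrix.mul_assoc]

theorem stmt_0_general (r a : ℤ) (hr : 1 ≤ r)
    (hcop : Int.gcd a r = 1)
    (v₀ v₁ : Z2)
    (hH : HNFis v₀ v₁ a r)
    (G : Matrix (Fin 2) (Fin 2) ℤ) (hG : G.det = -1) :
    ∃ a' : ℤ, 0 ≤ a' ∧ a' < r ∧ r ∣ a * a' - 1 ∧
      HNFis (applyZ G v₁) (applyZ G v₀) a' r := by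
  obtain ⟨a', ha'0, ha'r, hinv⟩ := exists_emod_inverse (by omega) hcop
  exact ⟨a', ha'0, ha'r, hinv, hH.applyZ_swap hG hinv⟩

/-- If a cone `σ` with primitive anticlockwise ray generators `v₀, v₁` has Hermite normal
form `[[1, a], [0, r]]` and `G` has determinant `-1`, then `Gσ` (whose anticlockwise
generators are `Gv₁, Gv₀`) has Hermite normal form `[[1, a*], [0, r]]` with
`a·a* ≡ 1 (mod r)`. -/
theorem stmt_0 (r a : ℤ) (hr : 1 ≤ r) (ha0 : 0 ≤ a) (har : a < r)
    (hcop : Int.gcd a r = 1)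
    (v₀ v₁ : Z2) (hp0 : IsPrimitive v₀) (hp1 : IsPrimitive v₁)
    (hanticlockwise : 0 < v₀.1 * v₁.2 - v₀.2 * v₁.1)
    (hH : HNFis v₀ v₁ a r)
    (G : Matrix (Fin 2) (Fin 2) ℤ) (hG : G.det = -1) :
    ∃ a' : ℤ, 0 ≤ a' ∧ a' < r ∧ r ∣ a * a' - 1 ∧
      HNFis (applyZ G v₁) (applyZ G v₀) a' r :=
  stmt_0_general r a hr hcop v₀ v₁ hH G hG
end

section
/- A Fano triangle P ⊂ ℚ² has its dual polygon's barycentre equal to the origin (i.e. P is Kähler–Einstein) if and only if P has weights (1,1,1), i.e. the sum of its three vertices is the zero vector. -/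
/-- The polar dual of a polygon in `ℚ²`. -/
def polarDual (P : Set Q2) : Set Q2 := {u : Q2 | ∀ x ∈ P, u.1 * x.1 + u.2 * x.2 ≥ -1}


namespace KEaux

def pr (u x : Q2) : ℚ := u.1 * x.1 + u.2 * x.2

lemma pr_comb (a b : ℚ) (x y w : Q2) : pr (a • x + b • y) w = a * pr x w + b * pr y w := by
  simp [pr, Prod.smul_fst, Prod.smul_snd, smul_eq_mul]; ring

lemma absorb (S : Set Q2) (h0 : (0 : Q2) ∈ interior S) (y : Q2) :
    ∃ ε : ℚ, 0 < ε ∧ ε • y ∈ S := by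
  have hc : Continuous fun t : ℚ => t • y := continuous_id.smul continuous_const
  have hU : IsOpen ((fun t : ℚ => t • y) ⁻¹' interior S) := (isOpen_interior).preimage hc
  have h0' : (0 : ℚ) ∈ (fun t : ℚ => t • y) ⁻¹' interior S := by
    simp only [Set.mem_preimage, zero_smul]; exact h0
  obtain ⟨l, u, hlu, hsub⟩ := mem_nhds_iff_exists_Ioo_subset.1 (hU.mem_nhds h0')
  refine ⟨u / 2, by linarith [hlu.1, hlu.2], ?_⟩
  exact interior_subset (hsub ⟨by linarith [hlu.1, hlu.2], by linarith [hlu.2]⟩)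

lemma halfspace_convex (w : Q2) (r : ℚ) : Convex ℚ {x : Q2 | r ≤ pr x w} := by
  intro x hx y hy a b ha hb hab
  simp only [Set.mem_setOf_eq] at *
  rw [pr_comb]
  have h1 : a * r ≤ a * pr x w := mul_le_mul_of_nonneg_left hx ha
  have h2 : b * r ≤ b * pr y w := mul_le_mul_of_nonneg_left hy hb
  have h3 : a * r + b * r = r := by linear_combination r * hab
  linarith

lemma hull_bound {A B C : Q2} (w : Q2) (r : ℚ)
    (hA : r ≤ pr A w) (hB : r ≤ pr B w) (hC : r ≤ pr C w) :
    ∀ x ∈ convexHull ℚ ({A, B, C} : Set Q2), r ≤ pr x w := by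
  intro x hx
  have := convexHull_min (show ({A,B,C} : Set Q2) ⊆ {x : Q2 | r ≤ pr x w} by
    intro z hz
    rcases hz with rfl | rfl | rfl <;> assumption) (halfspace_convex w r)
  exact this hx

lemma no_halfline (A B C : Q2) (h0 : (0 : Q2) ∈ interior (convexHull ℚ ({A, B, C} : Set Q2)))
    (m : Q2) (hm : m ≠ 0) (hA : 0 ≤ pr A m) (hB : 0 ≤ pr B m) (hC : 0 ≤ pr C m) : False := by
  obtain ⟨ε, hε, hmem⟩ := absorb _ h0 (-m)
  have hb := hull_bound m 0 hA hB hC _ hmem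
  have hmm : m.1 ^ 2 + m.2 ^ 2 > 0 := by
    by_contra hle
    push_neg at hle
    have h1 : m.1 = 0 := by nlinarith [sq_nonneg m.1, sq_nonneg m.2]
    have h2 : m.2 = 0 := by nlinarith [sq_nonneg m.1, sq_nonneg m.2]
    exact hm (Prod.ext h1 h2)
  have : pr (ε • (-m)) m = -ε * (m.1 ^ 2 + m.2 ^ 2) := by
    simp [pr, Prod.smul_fst, Prod.smul_snd, smul_eq_mul]; ring
  rw [this] at hb
  nlinarith

lemma det_ne (A B C : Q2) (h0 : (0 : Q2) ∈ interior (convexHull ℚ ({A, B, C} : Set Q2)))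
    (hB : B ≠ 0) : B.1 * C.2 - B.2 * C.1 ≠ 0 := by
  intro hd
  have hBne : ¬ (B.1 = 0 ∧ B.2 = 0) := by
    rintro ⟨h1, h2⟩; exact hB (Prod.ext h1 h2)
  rcases le_total 0 (pr A (-B.2, B.1)) with h | h
  · refine no_halfline A B C h0 (-B.2, B.1) ?_ h ?_ ?_
    · intro hcon
      exact hBne ⟨congrArg Prod.snd hcon, by simpa using congrArg Prod.fst hcon⟩
    · simp only [pr]; linarith
    · simp only [pr]; linarith
  · refine no_halfline A B C h0 (B.2, -B.1) ?_ ?_ ?_ ?_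
    · intro hcon
      exact hBne ⟨by simpa using congrArg Prod.snd hcon, congrArg Prod.fst hcon⟩
    · simp only [pr] at h ⊢; linarith
    · simp only [pr]; linarith
    · simp only [pr]; linarith

lemma combo_of_mem (A B C : Q2) {x : Q2} (hx : x ∈ convexHull ℚ ({A, B, C} : Set Q2)) :
    ∃ a b c : ℚ, 0 ≤ a ∧ 0 ≤ b ∧ 0 ≤ c ∧ a + b + c = 1 ∧ a • A + b • B + c • C = x := by
  rw [convexHull_insert (Set.insert_nonempty _ _), convexHull_pair] at hx
  rw [mem_convexJoin] at hx
  obtain ⟨a0, ha0, y, hy, hseg⟩ := hx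
  rw [Set.mem_singleton_iff] at ha0
  subst ha0
  obtain ⟨s, t, hs, ht, hst, hy'⟩ := hy
  obtain ⟨a, u, ha, hu, hau, hx'⟩ := hseg
  exact ⟨a, u * s, u * t, ha, mul_nonneg hu hs, mul_nonneg hu ht, by nlinarith, by
    rw [← hx', ← hy']; rw [smul_add, smul_smul, smul_smul]; abel⟩

lemma mem_of_combo (A B C : Q2) {a b c : ℚ} (ha : 0 ≤ a) (hb : 0 ≤ b) (hc : 0 ≤ c)
    (habc : a + b + c = 1) : a • A + b • B + c • C ∈ convexHull ℚ ({A, B, C} : Set Q2) := by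
  have hAm : A ∈ convexHull ℚ ({A, B, C} : Set Q2) := subset_convexHull _ _ (by simp)
  have hBm : B ∈ convexHull ℚ ({A, B, C} : Set Q2) := subset_convexHull _ _ (by simp)
  have hCm : C ∈ convexHull ℚ ({A, B, C} : Set Q2) := subset_convexHull _ _ (by simp)
  have hconv := convex_convexHull ℚ ({A, B, C} : Set Q2)
  rcases eq_or_lt_of_le (add_nonneg hb hc) with h | h
  · have hb0 : b = 0 := by linarith
    have hc0 : c = 0 := by linarith
    have ha1 : a = 1 := by linarith
    simpa [hb0, hc0, ha1] using hAm
  · have hm : (b / (b + c)) • B + (c / (b + c)) • C ∈ convexHull ℚ ({A, B, C} : Set Q2) :=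
      hconv hBm hCm (by positivity) (by positivity) (by field_simp)
    have := hconv hAm hm ha (le_of_lt h) (by linarith)
    have heq : a • A + (b + c) • ((b / (b + c)) • B + (c / (b + c)) • C)
        = a • A + b • B + c • C := by
      rw [smul_add, smul_smul, smul_smul]
      rw [mul_div_cancel₀ _ (ne_of_gt h), mul_div_cancel₀ _ (ne_of_gt h)]
      abel
    rwa [heq] at this

lemma pr_add (x y w : Q2) : pr (x + y) w = pr x w + pr y w := by
  simp [pr]; ring

lemma pr_comm (x y : Q2) : pr x y = pr y x := by simp [pr]; ring

def dualPt (X Y : Q2) : Q2 :=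
  ((X.2 - Y.2) / (X.1 * Y.2 - X.2 * Y.1), (Y.1 - X.1) / (X.1 * Y.2 - X.2 * Y.1))

lemma pr_dualPt_left (X Y : Q2) (hd : X.1 * Y.2 - X.2 * Y.1 ≠ 0) :
    pr (dualPt X Y) X = -1 := by
  simp only [pr, dualPt]; rw [div_mul_eq_mul_div, div_mul_eq_mul_div, ← add_div, div_eq_iff hd]; ring

lemma pr_dualPt_right (X Y : Q2) (hd : X.1 * Y.2 - X.2 * Y.1 ≠ 0) :
    pr (dualPt X Y) Y = -1 := by
  simp only [pr, dualPt]; rw [div_mul_eq_mul_div, div_mul_eq_mul_div, ← add_div, div_eq_iff hd]; ring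

lemma pr_dualPt_opp (X Y Z : Q2) (hd : Y.1 * Z.2 - Y.2 * Z.1 ≠ 0) :
    pr (dualPt Y Z) X
      = ((Z.1 * X.2 - Z.2 * X.1) + (X.1 * Y.2 - X.2 * Y.1)) / (Y.1 * Z.2 - Y.2 * Z.1) := by
  simp only [pr, dualPt]; field_simp; ring

lemma pr_inj {X Y : Q2} (hd : X.1 * Y.2 - X.2 * Y.1 ≠ 0) {u v : Q2}
    (h1 : pr u X = pr v X) (h2 : pr u Y = pr v Y) : u = v := by
  simp only [pr] at h1 h2
  apply Prod.ext
  · have h : (u.1 - v.1) * (X.1 * Y.2 - X.2 * Y.1) = 0 := by linear_combination Y.2 * h1 - X.2 * h2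
    rcases mul_eq_zero.1 h with h | h
    · linarith
    · exact absurd h hd
  · have h : (u.2 - v.2) * (X.1 * Y.2 - X.2 * Y.1) = 0 := by linear_combination X.1 * h2 - Y.1 * h1
    rcases mul_eq_zero.1 h with h | h
    · linarith
    · exact absurd h hd

lemma eq_dualPt {X Y : Q2} (hd : X.1 * Y.2 - X.2 * Y.1 ≠ 0) {u : Q2}
    (h1 : pr u X = -1) (h2 : pr u Y = -1) : u = dualPt X Y :=
  pr_inj hd (by rw [h1, pr_dualPt_left X Y hd]) (by rw [h2, pr_dualPt_right X Y hd])

lemma seg_eq {t1 t2 p q : ℚ} (ht1 : 0 < t1) (ht2 : 0 < t2) (hs : t1 + t2 = 1)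
    (hp : -1 ≤ p) (hq : -1 ≤ q) (h : t1 * p + t2 * q = -1) : p = -1 ∧ q = -1 := by
  have key : t1 * (p + 1) + t2 * (q + 1) = 0 := by linear_combination h + hs
  have h1 : 0 ≤ t1 * (p + 1) := mul_nonneg ht1.le (by linarith)
  have h2 : 0 ≤ t2 * (q + 1) := mul_nonneg ht2.le (by linarith)
  have e1 : t1 * (p + 1) = 0 := by linarith
  have e2 : t2 * (q + 1) = 0 := by linarith
  constructor
  · rcases mul_eq_zero.1 e1 with h | h
    · linarith
    · linarith
  · rcases mul_eq_zero.1 e2 with h | h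
    · linarith
    · linarith

lemma extreme_pt_aux (S : Set Q2) (X Y : Q2) (hd : X.1 * Y.2 - X.2 * Y.1 ≠ 0)
    (hmem : dualPt X Y ∈ S)
    (hbX : ∀ u ∈ S, -1 ≤ pr u X) (hbY : ∀ u ∈ S, -1 ≤ pr u Y) :
    dualPt X Y ∈ Set.extremePoints ℚ S := by
  rw [mem_extremePoints]
  refine ⟨hmem, fun x₁ hx₁ x₂ hx₂ hseg => ?_⟩
  obtain ⟨t1, t2, ht1, ht2, hsum, heq⟩ := hseg
  have eX : t1 * pr x₁ X + t2 * pr x₂ X = -1 := by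
    have := congrArg (fun z => pr z X) heq
    rw [pr_comb, pr_dualPt_left X Y hd] at this
    exact this
  have eY : t1 * pr x₁ Y + t2 * pr x₂ Y = -1 := by
    have := congrArg (fun z => pr z Y) heq
    rw [pr_comb, pr_dualPt_right X Y hd] at this
    exact this
  obtain ⟨hX1, hX2⟩ := seg_eq ht1 ht2 hsum (hbX x₁ hx₁) (hbX x₂ hx₂) eX
  obtain ⟨hY1, hY2⟩ := seg_eq ht1 ht2 hsum (hbY x₁ hx₁) (hbY x₂ hx₂) eY
  exact ⟨eq_dualPt hd hX1 hY1, eq_dualPt hd hX2 hY2⟩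

lemma comb_ge {a b p q : ℚ} (ha : 0 ≤ a) (hb : 0 ≤ b) (hab : a + b = 1)
    (hp : -1 ≤ p) (hq : -1 ≤ q) : -1 ≤ a * p + b * q := by
  have h1 := mul_le_mul_of_nonneg_left hp ha
  have h2 := mul_le_mul_of_nonneg_left hq hb
  nlinarith

lemma div_pos_of_mul_pos {x y : ℚ} (h : 0 < x * y) : 0 < x / y := by
  rw [div_pos_iff]
  rcases mul_pos_iff.1 h with ⟨h1, h2⟩ | ⟨h1, h2⟩
  · exact Or.inl ⟨h1, h2⟩
  · exact Or.inr ⟨h1, h2⟩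

lemma div_lemma {x y z : ℚ} (hz : z ≠ 0) (h : 0 < z * (x + y + z)) : -1 < (x + y) / z := by
  have h1 : 0 < (x + y + z) / z := div_pos_of_mul_pos (by nlinarith)
  have h2 : (x + y) / z = (x + y + z) / z - 1 := by field_simp; ring
  linarith

section Main

variable {A B C : Q2}

lemma dual_desc (A B C : Q2) :
    polarDual (convexHull ℚ ({A, B, C} : Set Q2))
      = {u : Q2 | -1 ≤ pr u A ∧ -1 ≤ pr u B ∧ -1 ≤ pr u C} := by
  ext u
  constructor
  · intro hu
    exact ⟨hu A (subset_convexHull _ _ (by simp)), hu B (subset_convexHull _ _ (by simp)),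
      hu C (subset_convexHull _ _ (by simp))⟩
  · rintro ⟨h1, h2, h3⟩ x hx
    have := hull_bound u (-1) (by rw [pr_comm]; exact h1) (by rw [pr_comm]; exact h2)
      (by rw [pr_comm]; exact h3) x hx
    rw [pr_comm] at this
    exact this

lemma S_convex (A B C : Q2) :
    Convex ℚ {u : Q2 | -1 ≤ pr u A ∧ -1 ≤ pr u B ∧ -1 ≤ pr u C} := by
  intro x hx y hy a b ha hb hab
  simp only [Set.mem_setOf_eq] at *
  refine ⟨?_, ?_, ?_⟩ <;> rw [pr_comb]
  · exact comb_ge ha hb hab hx.1 hy.1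
  · exact comb_ge ha hb hab hx.2.1 hy.2.1
  · exact comb_ge ha hb hab hx.2.2 hy.2.2

lemma mem_S_U1
    (hd1 : B.1 * C.2 - B.2 * C.1 ≠ 0)
    (hs1 : 0 < (B.1 * C.2 - B.2 * C.1)
      * ((B.1 * C.2 - B.2 * C.1) + (C.1 * A.2 - C.2 * A.1) + (A.1 * B.2 - A.2 * B.1))) :
    dualPt B C ∈ {u : Q2 | -1 ≤ pr u A ∧ -1 ≤ pr u B ∧ -1 ≤ pr u C} := by
  refine ⟨?_, ?_, ?_⟩
  · rw [pr_dualPt_opp A B C hd1]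
    exact (div_lemma hd1 (by nlinarith)).le
  · rw [pr_dualPt_left B C hd1]
  · rw [pr_dualPt_right B C hd1]

lemma mem_S_U2
    (hd2 : C.1 * A.2 - C.2 * A.1 ≠ 0)
    (hs2 : 0 < (C.1 * A.2 - C.2 * A.1)
      * ((B.1 * C.2 - B.2 * C.1) + (C.1 * A.2 - C.2 * A.1) + (A.1 * B.2 - A.2 * B.1))) :
    dualPt C A ∈ {u : Q2 | -1 ≤ pr u A ∧ -1 ≤ pr u B ∧ -1 ≤ pr u C} := by
  refine ⟨?_, ?_, ?_⟩
  · rw [pr_dualPt_right C A hd2]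
  · rw [pr_dualPt_opp B C A hd2]
    exact (div_lemma hd2 (by nlinarith)).le
  · rw [pr_dualPt_left C A hd2]

lemma mem_S_U3
    (hd3 : A.1 * B.2 - A.2 * B.1 ≠ 0)
    (hs3 : 0 < (A.1 * B.2 - A.2 * B.1)
      * ((B.1 * C.2 - B.2 * C.1) + (C.1 * A.2 - C.2 * A.1) + (A.1 * B.2 - A.2 * B.1))) :
    dualPt A B ∈ {u : Q2 | -1 ≤ pr u A ∧ -1 ≤ pr u B ∧ -1 ≤ pr u C} := by
  refine ⟨?_, ?_, ?_⟩
  · rw [pr_dualPt_left A B hd3]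
  · rw [pr_dualPt_right A B hd3]
  · rw [pr_dualPt_opp C A B hd3]
    exact (div_lemma hd3 (by nlinarith)).le

lemma dual_hull
    (hd1 : B.1 * C.2 - B.2 * C.1 ≠ 0) (hd2 : C.1 * A.2 - C.2 * A.1 ≠ 0)
    (hd3 : A.1 * B.2 - A.2 * B.1 ≠ 0)
    (h12 : 0 < (B.1 * C.2 - B.2 * C.1) * (C.1 * A.2 - C.2 * A.1))
    (h13 : 0 < (B.1 * C.2 - B.2 * C.1) * (A.1 * B.2 - A.2 * B.1)) :
    {u : Q2 | -1 ≤ pr u A ∧ -1 ≤ pr u B ∧ -1 ≤ pr u C}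
      = convexHull ℚ ({dualPt B C, dualPt C A, dualPt A B} : Set Q2) := by
  have h23 : 0 < (C.1 * A.2 - C.2 * A.1) * (A.1 * B.2 - A.2 * B.1) := by
    nlinarith [mul_pos h12 h13, mul_self_pos.2 hd1]
  have hs1 : 0 < (B.1 * C.2 - B.2 * C.1)
      * ((B.1 * C.2 - B.2 * C.1) + (C.1 * A.2 - C.2 * A.1) + (A.1 * B.2 - A.2 * B.1)) := by
    nlinarith [mul_self_pos.2 hd1]
  have hs2 : 0 < (C.1 * A.2 - C.2 * A.1)
      * ((B.1 * C.2 - B.2 * C.1) + (C.1 * A.2 - C.2 * A.1) + (A.1 * B.2 - A.2 * B.1)) := by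
    nlinarith [mul_self_pos.2 hd2]
  have hs3 : 0 < (A.1 * B.2 - A.2 * B.1)
      * ((B.1 * C.2 - B.2 * C.1) + (C.1 * A.2 - C.2 * A.1) + (A.1 * B.2 - A.2 * B.1)) := by
    nlinarith [mul_self_pos.2 hd3]
  have hssum : (B.1 * C.2 - B.2 * C.1) + (C.1 * A.2 - C.2 * A.1) + (A.1 * B.2 - A.2 * B.1) ≠ 0 := by
    intro h; rw [h, mul_zero] at hs1; exact lt_irrefl 0 hs1
  have hq1 : 0 < (B.1 * C.2 - B.2 * C.1)
      / ((B.1 * C.2 - B.2 * C.1) + (C.1 * A.2 - C.2 * A.1) + (A.1 * B.2 - A.2 * B.1)) :=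
    div_pos_of_mul_pos hs1
  have hq2 : 0 < (C.1 * A.2 - C.2 * A.1)
      / ((B.1 * C.2 - B.2 * C.1) + (C.1 * A.2 - C.2 * A.1) + (A.1 * B.2 - A.2 * B.1)) :=
    div_pos_of_mul_pos hs2
  have hq3 : 0 < (A.1 * B.2 - A.2 * B.1)
      / ((B.1 * C.2 - B.2 * C.1) + (C.1 * A.2 - C.2 * A.1) + (A.1 * B.2 - A.2 * B.1)) :=
    div_pos_of_mul_pos hs3
  apply Set.eq_of_subset_of_subset
  · intro u hu
    obtain ⟨p1, p2, p3⟩ := hu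
    have ha : 0 ≤ (pr u A + 1) * ((B.1 * C.2 - B.2 * C.1)
        / ((B.1 * C.2 - B.2 * C.1) + (C.1 * A.2 - C.2 * A.1) + (A.1 * B.2 - A.2 * B.1))) :=
      mul_nonneg (by linarith) hq1.le
    have hb : 0 ≤ (pr u B + 1) * ((C.1 * A.2 - C.2 * A.1)
        / ((B.1 * C.2 - B.2 * C.1) + (C.1 * A.2 - C.2 * A.1) + (A.1 * B.2 - A.2 * B.1))) :=
      mul_nonneg (by linarith) hq2.le
    have hc : 0 ≤ (pr u C + 1) * ((A.1 * B.2 - A.2 * B.1)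
        / ((B.1 * C.2 - B.2 * C.1) + (C.1 * A.2 - C.2 * A.1) + (A.1 * B.2 - A.2 * B.1))) :=
      mul_nonneg (by linarith) hq3.le
    have habc : (pr u A + 1) * ((B.1 * C.2 - B.2 * C.1)
        / ((B.1 * C.2 - B.2 * C.1) + (C.1 * A.2 - C.2 * A.1) + (A.1 * B.2 - A.2 * B.1)))
        + (pr u B + 1) * ((C.1 * A.2 - C.2 * A.1)
        / ((B.1 * C.2 - B.2 * C.1) + (C.1 * A.2 - C.2 * A.1) + (A.1 * B.2 - A.2 * B.1)))
        + (pr u C + 1) * ((A.1 * B.2 - A.2 * B.1)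
        / ((B.1 * C.2 - B.2 * C.1) + (C.1 * A.2 - C.2 * A.1) + (A.1 * B.2 - A.2 * B.1))) = 1 := by
      simp only [pr]
      linear_combination mul_inv_cancel₀ hssum
    have hcombo : ((pr u A + 1) * ((B.1 * C.2 - B.2 * C.1)
        / ((B.1 * C.2 - B.2 * C.1) + (C.1 * A.2 - C.2 * A.1) + (A.1 * B.2 - A.2 * B.1))))
          • dualPt B C
        + ((pr u B + 1) * ((C.1 * A.2 - C.2 * A.1)
        / ((B.1 * C.2 - B.2 * C.1) + (C.1 * A.2 - C.2 * A.1) + (A.1 * B.2 - A.2 * B.1))))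
          • dualPt C A
        + ((pr u C + 1) * ((A.1 * B.2 - A.2 * B.1)
        / ((B.1 * C.2 - B.2 * C.1) + (C.1 * A.2 - C.2 * A.1) + (A.1 * B.2 - A.2 * B.1))))
          • dualPt A B = u := by
      apply Prod.ext
      · simp only [pr, dualPt, Prod.fst_add, Prod.smul_fst, smul_eq_mul]
        linear_combination (u.1 * A.1 + u.2 * A.2 + 1) * (B.2 - C.2) / ((B.1 * C.2 - B.2 * C.1) + (C.1 * A.2 - C.2 * A.1) + (A.1 * B.2 - A.2 * B.1)) * mul_inv_cancel₀ hd1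
          + (u.1 * B.1 + u.2 * B.2 + 1) * (C.2 - A.2) / ((B.1 * C.2 - B.2 * C.1) + (C.1 * A.2 - C.2 * A.1) + (A.1 * B.2 - A.2 * B.1)) * mul_inv_cancel₀ hd2
          + (u.1 * C.1 + u.2 * C.2 + 1) * (A.2 - B.2) / ((B.1 * C.2 - B.2 * C.1) + (C.1 * A.2 - C.2 * A.1) + (A.1 * B.2 - A.2 * B.1)) * mul_inv_cancel₀ hd3
          + u.1 * mul_inv_cancel₀ hssum
      · simp only [pr, dualPt, Prod.snd_add, Prod.smul_snd, smul_eq_mul]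
        linear_combination (u.1 * A.1 + u.2 * A.2 + 1) * (C.1 - B.1) / ((B.1 * C.2 - B.2 * C.1) + (C.1 * A.2 - C.2 * A.1) + (A.1 * B.2 - A.2 * B.1)) * mul_inv_cancel₀ hd1
          + (u.1 * B.1 + u.2 * B.2 + 1) * (A.1 - C.1) / ((B.1 * C.2 - B.2 * C.1) + (C.1 * A.2 - C.2 * A.1) + (A.1 * B.2 - A.2 * B.1)) * mul_inv_cancel₀ hd2
          + (u.1 * C.1 + u.2 * C.2 + 1) * (B.1 - A.1) / ((B.1 * C.2 - B.2 * C.1) + (C.1 * A.2 - C.2 * A.1) + (A.1 * B.2 - A.2 * B.1)) * mul_inv_cancel₀ hd3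
          + u.2 * mul_inv_cancel₀ hssum
    rw [← hcombo]
    exact mem_of_combo _ _ _ ha hb hc habc
  · apply convexHull_min ?_ (S_convex A B C)
    intro z hz
    rcases hz with rfl | rfl | rfl
    · exact mem_S_U1 hd1 hs1
    · exact mem_S_U2 hd2 hs2
    · exact mem_S_U3 hd3 hs3

lemma extremePoints_dual
    (hd1 : B.1 * C.2 - B.2 * C.1 ≠ 0) (hd2 : C.1 * A.2 - C.2 * A.1 ≠ 0)
    (hd3 : A.1 * B.2 - A.2 * B.1 ≠ 0)
    (h12 : 0 < (B.1 * C.2 - B.2 * C.1) * (C.1 * A.2 - C.2 * A.1))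
    (h13 : 0 < (B.1 * C.2 - B.2 * C.1) * (A.1 * B.2 - A.2 * B.1)) :
    Set.extremePoints ℚ {u : Q2 | -1 ≤ pr u A ∧ -1 ≤ pr u B ∧ -1 ≤ pr u C}
      = {dualPt B C, dualPt C A, dualPt A B} := by
  have h23 : 0 < (C.1 * A.2 - C.2 * A.1) * (A.1 * B.2 - A.2 * B.1) := by
    nlinarith [mul_pos h12 h13, mul_self_pos.2 hd1]
  have hs1 : 0 < (B.1 * C.2 - B.2 * C.1)
      * ((B.1 * C.2 - B.2 * C.1) + (C.1 * A.2 - C.2 * A.1) + (A.1 * B.2 - A.2 * B.1)) := by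
    nlinarith [mul_self_pos.2 hd1]
  have hs2 : 0 < (C.1 * A.2 - C.2 * A.1)
      * ((B.1 * C.2 - B.2 * C.1) + (C.1 * A.2 - C.2 * A.1) + (A.1 * B.2 - A.2 * B.1)) := by
    nlinarith [mul_self_pos.2 hd2]
  have hs3 : 0 < (A.1 * B.2 - A.2 * B.1)
      * ((B.1 * C.2 - B.2 * C.1) + (C.1 * A.2 - C.2 * A.1) + (A.1 * B.2 - A.2 * B.1)) := by
    nlinarith [mul_self_pos.2 hd3]
  apply Set.eq_of_subset_of_subset
  · rw [dual_hull hd1 hd2 hd3 h12 h13]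
    exact extremePoints_convexHull_subset
  · intro z hz
    rcases hz with rfl | rfl | rfl
    · exact extreme_pt_aux _ B C hd1 (mem_S_U1 hd1 hs1)
        (fun u hu => hu.2.1) (fun u hu => hu.2.2)
    · exact extreme_pt_aux _ C A hd2 (mem_S_U2 hd2 hs2)
        (fun u hu => hu.2.2) (fun u hu => hu.1)
    · exact extreme_pt_aux _ A B hd3 (mem_S_U3 hd3 hs3)
        (fun u hu => hu.1) (fun u hu => hu.2.1)

lemma signs (A B C : Q2) (h0 : (0 : Q2) ∈ interior (convexHull ℚ ({A, B, C} : Set Q2)))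
    (hd1 : B.1 * C.2 - B.2 * C.1 ≠ 0) (hd2 : C.1 * A.2 - C.2 * A.1 ≠ 0)
    (hd3 : A.1 * B.2 - A.2 * B.1 ≠ 0) :
    0 < (B.1 * C.2 - B.2 * C.1) * (C.1 * A.2 - C.2 * A.1)
      ∧ 0 < (B.1 * C.2 - B.2 * C.1) * (A.1 * B.2 - A.2 * B.1) := by
  obtain ⟨a, b, c, ha, hb, hc, habc, hsum⟩ := combo_of_mem A B C (interior_subset h0)
  have e1 : a * A.1 + b * B.1 + c * C.1 = 0 := by
    have := congrArg Prod.fst hsum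
    simpa [Prod.fst_add, Prod.smul_fst, smul_eq_mul] using this
  have e2 : a * A.2 + b * B.2 + c * C.2 = 0 := by
    have := congrArg Prod.snd hsum
    simpa [Prod.snd_add, Prod.smul_snd, smul_eq_mul] using this
  have r1 : b * (B.1 * C.2 - B.2 * C.1) = a * (C.1 * A.2 - C.2 * A.1) := by
    linear_combination C.2 * e1 - C.1 * e2
  have r2 : c * (B.1 * C.2 - B.2 * C.1) = a * (A.1 * B.2 - A.2 * B.1) := by
    linear_combination B.1 * e2 - B.2 * e1
  have ha0 : a ≠ 0 := by
    intro h
    rw [h, zero_mul] at r1 r2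
    have hb0 : b = 0 := by
      rcases mul_eq_zero.1 r1 with h' | h'
      · exact h'
      · exact absurd h' hd1
    have hc0 : c = 0 := by
      rcases mul_eq_zero.1 r2 with h' | h'
      · exact h'
      · exact absurd h' hd1
    rw [h, hb0, hc0] at habc
    norm_num at habc
  have hapos : 0 < a := lt_of_le_of_ne ha (Ne.symm ha0)
  have hb0 : b ≠ 0 := by
    intro h
    rw [h, zero_mul] at r1
    rcases mul_eq_zero.1 r1.symm with h' | h'
    · exact ha0 h'
    · exact hd2 h'
  have hc0 : c ≠ 0 := by
    intro h
    rw [h, zero_mul] at r2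
    rcases mul_eq_zero.1 r2.symm with h' | h'
    · exact ha0 h'
    · exact hd3 h'
  have hbpos : 0 < b := lt_of_le_of_ne hb (Ne.symm hb0)
  have hcpos : 0 < c := lt_of_le_of_ne hc (Ne.symm hc0)
  constructor
  · have key : b * ((B.1 * C.2 - B.2 * C.1) * (B.1 * C.2 - B.2 * C.1))
        = a * ((B.1 * C.2 - B.2 * C.1) * (C.1 * A.2 - C.2 * A.1)) := by
      linear_combination (B.1 * C.2 - B.2 * C.1) * r1
    have h1 : 0 < b * ((B.1 * C.2 - B.2 * C.1) * (B.1 * C.2 - B.2 * C.1)) :=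
      mul_pos hbpos (mul_self_pos.2 hd1)
    rw [key] at h1
    rcases mul_pos_iff.1 h1 with ⟨_, h'⟩ | ⟨h', _⟩
    · exact h'
    · linarith
  · have key : c * ((B.1 * C.2 - B.2 * C.1) * (B.1 * C.2 - B.2 * C.1))
        = a * ((B.1 * C.2 - B.2 * C.1) * (A.1 * B.2 - A.2 * B.1)) := by
      linear_combination (B.1 * C.2 - B.2 * C.1) * r2
    have h1 : 0 < c * ((B.1 * C.2 - B.2 * C.1) * (B.1 * C.2 - B.2 * C.1)) :=
      mul_pos hcpos (mul_self_pos.2 hd1)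
    rw [key] at h1
    rcases mul_pos_iff.1 h1 with ⟨_, h'⟩ | ⟨h', _⟩
    · exact h'
    · linarith

lemma sum_iff
    (hd1 : B.1 * C.2 - B.2 * C.1 ≠ 0) (hd2 : C.1 * A.2 - C.2 * A.1 ≠ 0)
    (hd3 : A.1 * B.2 - A.2 * B.1 ≠ 0) :
    dualPt B C + dualPt C A + dualPt A B = 0 ↔ A + B + C = 0 := by
  constructor
  · intro h
    have eA : pr (dualPt B C) A + pr (dualPt C A) A + pr (dualPt A B) A = 0 := by
      have := congrArg (fun z => pr z A) h
      simp only [pr_add] at this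
      simpa [pr] using this
    have eB : pr (dualPt B C) B + pr (dualPt C A) B + pr (dualPt A B) B = 0 := by
      have := congrArg (fun z => pr z B) h
      simp only [pr_add] at this
      simpa [pr] using this
    rw [pr_dualPt_opp A B C hd1, pr_dualPt_right C A hd2, pr_dualPt_left A B hd3] at eA
    rw [pr_dualPt_left B C hd1, pr_dualPt_opp B C A hd2, pr_dualPt_right A B hd3] at eB
    have hEq1 : (C.1 * A.2 - C.2 * A.1) + (A.1 * B.2 - A.2 * B.1)
        = 2 * (B.1 * C.2 - B.2 * C.1) := by
      have e : ((C.1 * A.2 - C.2 * A.1) + (A.1 * B.2 - A.2 * B.1)) / (B.1 * C.2 - B.2 * C.1) = 2 := by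
        linarith
      rw [div_eq_iff hd1] at e
      linarith
    have hEq2 : (A.1 * B.2 - A.2 * B.1) + (B.1 * C.2 - B.2 * C.1)
        = 2 * (C.1 * A.2 - C.2 * A.1) := by
      have e : ((A.1 * B.2 - A.2 * B.1) + (B.1 * C.2 - B.2 * C.1)) / (C.1 * A.2 - C.2 * A.1) = 2 := by
        linarith
      rw [div_eq_iff hd2] at e
      linarith
    have heq12 : (B.1 * C.2 - B.2 * C.1) = (C.1 * A.2 - C.2 * A.1) := by linarith
    have heq13 : (B.1 * C.2 - B.2 * C.1) = (A.1 * B.2 - A.2 * B.1) := by linarith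
    have id1 : (B.1 * C.2 - B.2 * C.1) * A.1 + (C.1 * A.2 - C.2 * A.1) * B.1
        + (A.1 * B.2 - A.2 * B.1) * C.1 = 0 := by ring
    have id2 : (B.1 * C.2 - B.2 * C.1) * A.2 + (C.1 * A.2 - C.2 * A.1) * B.2
        + (A.1 * B.2 - A.2 * B.1) * C.2 = 0 := by ring
    have key1 : (B.1 * C.2 - B.2 * C.1) * (A.1 + B.1 + C.1) = 0 := by
      linear_combination id1 + B.1 * heq12 + C.1 * heq13
    have key2 : (B.1 * C.2 - B.2 * C.1) * (A.2 + B.2 + C.2) = 0 := by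
      linear_combination id2 + B.2 * heq12 + C.2 * heq13
    apply Prod.ext
    · simp only [Prod.fst_add, Prod.fst_zero]
      rcases mul_eq_zero.1 key1 with h' | h'
      · exact absurd h' hd1
      · exact h'
    · simp only [Prod.snd_add, Prod.snd_zero]
      rcases mul_eq_zero.1 key2 with h' | h'
      · exact absurd h' hd1
      · exact h'
  · intro h
    have h1 : A.1 + B.1 + C.1 = 0 := by
      have := congrArg Prod.fst h
      simpa [Prod.fst_add] using this
    have h2 : A.2 + B.2 + C.2 = 0 := by
      have := congrArg Prod.snd h
      simpa [Prod.snd_add] using this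
    have hd13 : (B.1 * C.2 - B.2 * C.1) = (A.1 * B.2 - A.2 * B.1) := by
      linear_combination B.1 * h2 - B.2 * h1
    have hd23 : (C.1 * A.2 - C.2 * A.1) = (A.1 * B.2 - A.2 * B.1) := by
      linear_combination A.2 * h1 - A.1 * h2
    apply Prod.ext
    · simp only [dualPt, Prod.fst_add, Prod.fst_zero]
      rw [hd13, hd23, ← add_div, ← add_div, div_eq_zero_iff]
      left; ring
    · simp only [dualPt, Prod.snd_add, Prod.snd_zero]
      rw [hd13, hd23, ← add_div, ← add_div, div_eq_zero_iff]
      left; ring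

lemma dualPt_ne_12
    (hd1 : B.1 * C.2 - B.2 * C.1 ≠ 0) (hd2 : C.1 * A.2 - C.2 * A.1 ≠ 0)
    (hs1 : 0 < (B.1 * C.2 - B.2 * C.1)
      * ((B.1 * C.2 - B.2 * C.1) + (C.1 * A.2 - C.2 * A.1) + (A.1 * B.2 - A.2 * B.1))) :
    dualPt B C ≠ dualPt C A := by
  intro h
  have h1 : pr (dualPt B C) A = -1 := by rw [h, pr_dualPt_right C A hd2]
  rw [pr_dualPt_opp A B C hd1] at h1
  have := div_lemma (x := (C.1 * A.2 - C.2 * A.1)) (y := (A.1 * B.2 - A.2 * B.1)) (z := (B.1 * C.2 - B.2 * C.1)) hd1 (by nlinarith)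
  linarith

lemma dualPt_ne_13
    (hd1 : B.1 * C.2 - B.2 * C.1 ≠ 0) (hd3 : A.1 * B.2 - A.2 * B.1 ≠ 0)
    (hs1 : 0 < (B.1 * C.2 - B.2 * C.1)
      * ((B.1 * C.2 - B.2 * C.1) + (C.1 * A.2 - C.2 * A.1) + (A.1 * B.2 - A.2 * B.1))) :
    dualPt B C ≠ dualPt A B := by
  intro h
  have h1 : pr (dualPt B C) A = -1 := by rw [h, pr_dualPt_left A B hd3]
  rw [pr_dualPt_opp A B C hd1] at h1
  have := div_lemma (x := (C.1 * A.2 - C.2 * A.1)) (y := (A.1 * B.2 - A.2 * B.1)) (z := (B.1 * C.2 - B.2 * C.1)) hd1 (by nlinarith)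
  linarith

lemma dualPt_ne_23
    (hd2 : C.1 * A.2 - C.2 * A.1 ≠ 0) (hd3 : A.1 * B.2 - A.2 * B.1 ≠ 0)
    (hs2 : 0 < (C.1 * A.2 - C.2 * A.1)
      * ((B.1 * C.2 - B.2 * C.1) + (C.1 * A.2 - C.2 * A.1) + (A.1 * B.2 - A.2 * B.1))) :
    dualPt C A ≠ dualPt A B := by
  intro h
  have h1 : pr (dualPt C A) B = -1 := by rw [h, pr_dualPt_right A B hd3]
  rw [pr_dualPt_opp B C A hd2] at h1
  have := div_lemma (x := (A.1 * B.2 - A.2 * B.1)) (y := (B.1 * C.2 - B.2 * C.1)) (z := (C.1 * A.2 - C.2 * A.1)) hd2 (by nlinarith)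
  linarith

end Main

lemma sum_three_of_set_eq {x y z a b c : Q2} (hxy : x ≠ y) (hxz : x ≠ z) (hyz : y ≠ z)
    (h : ({x, y, z} : Set Q2) = {a, b, c}) : x + y + z = a + b + c := by
  have hfin : ((({x, y, z} : Finset Q2) : Set Q2)) = ((({a, b, c} : Finset Q2) : Set Q2)) := by
    simpa using h
  have hfe : ({x, y, z} : Finset Q2) = ({a, b, c} : Finset Q2) := Finset.coe_injective hfin
  have hc3 : ({x, y, z} : Finset Q2).card = 3 := by
    rw [Finset.card_insert_of_notMem (by simp [hxy, hxz]),
      Finset.card_insert_of_notMem (by simp [hyz]), Finset.card_singleton]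
  have hc3' : ({a, b, c} : Finset Q2).card = 3 := by rw [← hfe]; exact hc3
  have hab : a ≠ b := by
    rintro rfl
    have : ({a, a, c} : Finset Q2) = ({a, c} : Finset Q2) := Finset.insert_idem a {c}
    rw [this] at hc3'
    have := Finset.card_insert_le a ({c} : Finset Q2)
    simp at this
    omega
  have hac : a ≠ c := by
    rintro rfl
    have ham : a ∈ ({b, a} : Finset Q2) := by simp
    have : ({a, b, a} : Finset Q2) = ({b, a} : Finset Q2) := Finset.insert_eq_self.2 ham
    rw [this] at hc3'
    have := Finset.card_insert_le b ({a} : Finset Q2)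
    simp at this
    omega
  have hbc : b ≠ c := by
    rintro rfl
    have : ({a, b, b} : Finset Q2) = ({a, b} : Finset Q2) := by
      congr 1
      exact Finset.insert_idem b ∅ ▸ rfl
    rw [this] at hc3'
    have := Finset.card_insert_le a ({b} : Finset Q2)
    simp at this
    omega
  have s1 : ∑ u ∈ ({x, y, z} : Finset Q2), u = x + y + z := by
    rw [Finset.sum_insert (by simp [hxy, hxz]), Finset.sum_insert (by simp [hyz]),
      Finset.sum_singleton]
    ring
  have s2 : ∑ u ∈ ({a, b, c} : Finset Q2), u = a + b + c := by
    rw [Finset.sum_insert (by simp [hab, hac]), Finset.sum_insert (by simp [hbc]),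
      Finset.sum_singleton]
    ring
  rw [← s1, ← s2, hfe]

end KEaux

/-- A Fano triangle is Kähler–Einstein (its dual triangle has barycentre the origin,
i.e. the sum of the three vertices of the dual is zero) iff the sum of its vertices
is the zero vector, i.e. it has weights `(1,1,1)`. -/
theorem stmt_1 (v₁ v₂ v₃ : Z2) (hcard : ({v₁, v₂, v₃} : Finset Z2).card = 3)
    (hF : IsFanoPolygon {v₁, v₂, v₃}) :
    (∃ w₁ w₂ w₃ : Q2,
        Set.extremePoints ℚ (polarDual (hull {v₁, v₂, v₃})) = {w₁, w₂, w₃} ∧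
        w₁ + w₂ + w₃ = 0) ↔
      v₁ + v₂ + v₃ = 0 := by
  obtain ⟨h0f, hprim, -⟩ := hF
  have himg : toQ '' ((({v₁, v₂, v₃} : Finset Z2)) : Set Z2)
      = ({toQ v₁, toQ v₂, toQ v₃} : Set Q2) := by
    simp [Set.image_insert_eq]
  have hhull : hull {v₁, v₂, v₃} = convexHull ℚ ({toQ v₁, toQ v₂, toQ v₃} : Set Q2) := by
    rw [show hull {v₁, v₂, v₃}
      = convexHull ℚ (toQ '' ((({v₁, v₂, v₃} : Finset Z2)) : Set Z2)) from rfl, himg]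
  rw [hhull] at h0f
  have hvne : ∀ v : Z2, IsPrimitive v → toQ v ≠ 0 := by
    intro v hv hzero
    have h1 : (v.1 : ℚ) = 0 := congrArg Prod.fst hzero
    have h2 : (v.2 : ℚ) = 0 := congrArg Prod.snd hzero
    have h1' : v.1 = 0 := by exact_mod_cast h1
    have h2' : v.2 = 0 := by exact_mod_cast h2
    rw [IsPrimitive, h1', h2'] at hv
    simp at hv
  have hA : toQ v₁ ≠ 0 := hvne v₁ (hprim v₁ (by simp))
  have hB : toQ v₂ ≠ 0 := hvne v₂ (hprim v₂ (by simp))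
  have hC : toQ v₃ ≠ 0 := hvne v₃ (hprim v₃ (by simp))
  have hsBCA : ({toQ v₂, toQ v₃, toQ v₁} : Set Q2) = {toQ v₁, toQ v₂, toQ v₃} := by
    ext w; simp only [Set.mem_insert_iff, Set.mem_singleton_iff]; tauto
  have hsCAB : ({toQ v₃, toQ v₁, toQ v₂} : Set Q2) = {toQ v₁, toQ v₂, toQ v₃} := by
    ext w; simp only [Set.mem_insert_iff, Set.mem_singleton_iff]; tauto
  have hd1 := KEaux.det_ne (toQ v₁) (toQ v₂) (toQ v₃) h0f hB
  have hd2 := KEaux.det_ne (toQ v₂) (toQ v₃) (toQ v₁) (by rw [hsBCA]; exact h0f) hC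
  have hd3 := KEaux.det_ne (toQ v₃) (toQ v₁) (toQ v₂) (by rw [hsCAB]; exact h0f) hA
  obtain ⟨h12, h13⟩ := KEaux.signs (toQ v₁) (toQ v₂) (toQ v₃) h0f hd1 hd2 hd3
  have h23 : 0 < ((toQ v₃).1 * (toQ v₁).2 - (toQ v₃).2 * (toQ v₁).1)
      * ((toQ v₁).1 * (toQ v₂).2 - (toQ v₁).2 * (toQ v₂).1) := by
    nlinarith [mul_pos h12 h13, mul_self_pos.2 hd1]
  have hs1 : 0 < ((toQ v₂).1 * (toQ v₃).2 - (toQ v₂).2 * (toQ v₃).1)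
      * (((toQ v₂).1 * (toQ v₃).2 - (toQ v₂).2 * (toQ v₃).1)
        + ((toQ v₃).1 * (toQ v₁).2 - (toQ v₃).2 * (toQ v₁).1)
        + ((toQ v₁).1 * (toQ v₂).2 - (toQ v₁).2 * (toQ v₂).1)) := by
    nlinarith [mul_self_pos.2 hd1]
  have hs2 : 0 < ((toQ v₃).1 * (toQ v₁).2 - (toQ v₃).2 * (toQ v₁).1)
      * (((toQ v₂).1 * (toQ v₃).2 - (toQ v₂).2 * (toQ v₃).1)
        + ((toQ v₃).1 * (toQ v₁).2 - (toQ v₃).2 * (toQ v₁).1)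
        + ((toQ v₁).1 * (toQ v₂).2 - (toQ v₁).2 * (toQ v₂).1)) := by
    nlinarith [mul_self_pos.2 hd2]
  have hne12 := KEaux.dualPt_ne_12 hd1 hd2 hs1
  have hne13 := KEaux.dualPt_ne_13 hd1 hd3 hs1
  have hne23 := KEaux.dualPt_ne_23 hd2 hd3 hs2
  have hEP : Set.extremePoints ℚ (polarDual (hull {v₁, v₂, v₃}))
      = {KEaux.dualPt (toQ v₂) (toQ v₃), KEaux.dualPt (toQ v₃) (toQ v₁),
          KEaux.dualPt (toQ v₁) (toQ v₂)} := by
    rw [hhull, KEaux.dual_desc, KEaux.extremePoints_dual hd1 hd2 hd3 h12 h13]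
  constructor
  · rintro ⟨w₁, w₂, w₃, hset, hsum⟩
    rw [hEP] at hset
    have hUsum := KEaux.sum_three_of_set_eq hne12 hne13 hne23 hset
    have hq : toQ v₁ + toQ v₂ + toQ v₃ = 0 :=
      (KEaux.sum_iff hd1 hd2 hd3).1 (by rw [hUsum, hsum])
    have h1 : (v₁.1 : ℚ) + (v₂.1 : ℚ) + (v₃.1 : ℚ) = 0 := by
      simpa [toQ, Prod.fst_add] using congrArg Prod.fst hq
    have h2 : (v₁.2 : ℚ) + (v₂.2 : ℚ) + (v₃.2 : ℚ) = 0 := by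
      simpa [toQ, Prod.snd_add] using congrArg Prod.snd hq
    have h1' : v₁.1 + v₂.1 + v₃.1 = 0 := by exact_mod_cast h1
    have h2' : v₁.2 + v₂.2 + v₃.2 = 0 := by exact_mod_cast h2
    exact Prod.ext h1' h2'
  · intro hv
    have h1 : v₁.1 + v₂.1 + v₃.1 = 0 := congrArg Prod.fst hv
    have h2 : v₁.2 + v₂.2 + v₃.2 = 0 := congrArg Prod.snd hv
    have hq : toQ v₁ + toQ v₂ + toQ v₃ = 0 := by
      apply Prod.ext
      · show (v₁.1 : ℚ) + (v₂.1 : ℚ) + (v₃.1 : ℚ) = 0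
        exact_mod_cast h1
      · show (v₁.2 : ℚ) + (v₂.2 : ℚ) + (v₃.2 : ℚ) = 0
        exact_mod_cast h2
    exact ⟨_, _, _, hEP, (KEaux.sum_iff hd1 hd2 hd3).2 hq⟩
end

section
/- A Fano triangle P ⊂ ℚ² is Kähler–Einstein (sum of vertices equals the origin) if and only if P is GL₂(ℤ)-equivalent to a triangle with vertices (-k, a-1), (k, -a), (0, 1) for some integers k, a ≥ 1 satisfying gcd(k, a) = gcd(k, a-1) = 1. -/

lemma applyZ_add (G : Matrix (Fin 2) (Fin 2) ℤ) (u w : Z2) :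
    applyZ G (u + w) = applyZ G u + applyZ G w := by
  simp only [applyZ, Prod.fst_add, Prod.snd_add, Prod.mk_add_mk, Prod.mk.injEq]
  constructor <;> ring

lemma applyZ_solve (G : Matrix (Fin 2) (Fin 2) ℤ) (v : Z2) :
    G 1 1 * (applyZ G v).1 - G 0 1 * (applyZ G v).2 = G.det * v.1 ∧
    G 0 0 * (applyZ G v).2 - G 1 0 * (applyZ G v).1 = G.det * v.2 := by
  simp only [applyZ, Matrix.det_fin_two]
  constructor <;> ring

lemma det_sq {G : Matrix (Fin 2) (Fin 2) ℤ} (hG : IsUnit G.det) : G.det * G.det = 1 := by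
  rcases Int.isUnit_iff.1 hG with h | h <;> simp [h]

lemma applyZ_eq_zero {G : Matrix (Fin 2) (Fin 2) ℤ} (hG : IsUnit G.det) {v : Z2}
    (h : applyZ G v = 0) : v = 0 := by
  obtain ⟨h1, h2⟩ := applyZ_solve G v
  rw [h] at h1 h2
  have hd := det_sq hG
  have hv1 : v.1 = 0 := by
    have h1' := h1; simp at h1'
    rcases h1' with h' | h'
    · rw [h'] at hd; simp at hd
    · exact h'
  have hv2 : v.2 = 0 := by
    have h2' := h2; simp at h2'
    rcases h2' with h' | h'
    · rw [h'] at hd; simp at hd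
    · exact h'
  exact Prod.ext hv1 hv2

lemma applyZ_inj {G : Matrix (Fin 2) (Fin 2) ℤ} (hG : IsUnit G.det) :
    Function.Injective (applyZ G) := by
  intro u w h
  have hz : applyZ G (u + (-w)) = 0 := by
    rw [applyZ_add, h]
    have : applyZ G (-w) = -applyZ G w := by
      simp only [applyZ, Prod.fst_neg, Prod.snd_neg, Prod.neg_mk, Prod.mk.injEq]
      constructor <;> ring
    rw [this]; abel
  have := applyZ_eq_zero hG hz
  have : u = w := by
    have h1 : u + -w = 0 := this
    linear_combination (norm := skip) h1
    abel
  exact this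

lemma applyZ_prim {G : Matrix (Fin 2) (Fin 2) ℤ} (hG : IsUnit G.det) {v : Z2}
    (hv : IsPrimitive v) : IsPrimitive (applyZ G v) := by
  rw [IsPrimitive, ← Int.isCoprime_iff_gcd_eq_one] at *
  obtain ⟨u, t, hut⟩ := hv
  obtain ⟨h1, h2⟩ := applyZ_solve G v
  have hd := det_sq hG
  exact ⟨u * G.det * G 1 1 - t * G.det * G 1 0, -(u * G.det * G 0 1) + t * G.det * G 0 0,
    by linear_combination u * G.det * h1 + t * G.det * h2 + G.det * G.det * hut + hd⟩

lemma pair_card_le (a b : Z2) (s : Finset Z2) (hs : s ⊆ {a, b}) : s.card ≤ 2 := by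
  calc s.card ≤ ({a, b} : Finset Z2).card := Finset.card_le_card hs
    _ ≤ ({b} : Finset Z2).card + 1 := Finset.card_insert_le a {b}
    _ ≤ 2 := by simp

/-- A Fano triangle is Kähler–Einstein (sum of vertices is the origin) iff it is
`GL₂(ℤ)`-equivalent to a triangle with vertices `(-k, a-1)`, `(k, -a)`, `(0, 1)` for some
integers `k, a ≥ 1` with `gcd(k, a) = gcd(k, a-1) = 1`. -/
theorem stmt_2 (v₁ v₂ v₃ : Z2) (hcard : ({v₁, v₂, v₃} : Finset Z2).card = 3)
    (hF : IsFanoPolygon {v₁, v₂, v₃}) :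
    v₁ + v₂ + v₃ = 0 ↔
      ∃ k a : ℤ, 1 ≤ k ∧ 1 ≤ a ∧ Int.gcd k a = 1 ∧ Int.gcd k (a - 1) = 1 ∧
        ∃ G : Matrix (Fin 2) (Fin 2) ℤ, IsUnit G.det ∧
          Finset.image (applyZ G) {v₁, v₂, v₃} =
            ({(-k, a - 1), (k, -a), (0, 1)} : Finset Z2) := by
  have h12 : v₁ ≠ v₂ := by
    rintro rfl
    have := pair_card_le v₁ v₃ {v₁, v₁, v₃} (by intro x; simp; try tauto); omega
  have h13 : v₁ ≠ v₃ := by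
    rintro rfl
    have := pair_card_le v₁ v₂ {v₁, v₂, v₁} (by intro x; simp; try tauto); omega
  have h23 : v₂ ≠ v₃ := by
    rintro rfl
    have := pair_card_le v₁ v₂ {v₁, v₂, v₂} (by intro x; simp; try tauto); omega
  obtain ⟨hint, hprim, hvert⟩ := hF
  have hp1 : IsPrimitive v₁ := hprim v₁ (by simp)
  have hp2 : IsPrimitive v₂ := hprim v₂ (by simp)
  have hp3 : IsPrimitive v₃ := hprim v₃ (by simp)
  constructor
  · -- forward
    intro hsum
    -- Bezout for v₃
    have hc3 : IsCoprime v₃.1 v₃.2 := Int.isCoprime_iff_gcd_eq_one.2 hp3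
    obtain ⟨x, y, hxy⟩ := hc3
    -- two candidate matrices
    set G₁ : Matrix (Fin 2) (Fin 2) ℤ := ![![v₃.2, -v₃.1], ![x, y]] with hG₁def
    set G₂ : Matrix (Fin 2) (Fin 2) ℤ := ![![-v₃.2, v₃.1], ![x, y]] with hG₂def
    have hdet₁ : G₁.det = 1 := by rw [Matrix.det_fin_two, hG₁def]; simp; linarith
    have hdet₂ : G₂.det = -1 := by rw [Matrix.det_fin_two, hG₂def]; simp; linarith
    have hu₁ : IsUnit G₁.det := by rw [hdet₁]; exact isUnit_one
    have hu₂ : IsUnit G₂.det := by rw [hdet₂]; exact (Int.isUnit_iff).2 (Or.inr rfl)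
    set p := v₃.2 * v₁.1 - v₃.1 * v₁.2 with hp
    set q := x * v₁.1 + y * v₁.2 with hq
    have e11 : applyZ G₁ v₁ = (p, q) := by
      simp [applyZ, hG₁def, hp, hq, Prod.ext_iff]; try constructor
      all_goals first | ring1 | linarith [hxy]
    have e13 : applyZ G₁ v₃ = (0, 1) := by
      simp [applyZ, hG₁def, Prod.ext_iff]; try constructor
      all_goals first | ring1 | linarith [hxy]
    have e21 : applyZ G₂ v₁ = (-p, q) := by
      simp [applyZ, hG₂def, hp, hq, Prod.ext_iff]; try constructor
      all_goals first | ring1 | linarith [hxy]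
    have e23 : applyZ G₂ v₃ = (0, 1) := by
      simp [applyZ, hG₂def, Prod.ext_iff]; try constructor
      all_goals first | ring1 | linarith [hxy]
    have hv2eq : v₂ = (-v₁.1 - v₃.1, -v₁.2 - v₃.2) := by
      have h1 : v₁.1 + v₂.1 + v₃.1 = 0 := by
        have := congrArg Prod.fst hsum; simpa using this
      have h2 : v₁.2 + v₂.2 + v₃.2 = 0 := by
        have := congrArg Prod.snd hsum; simpa using this
      exact Prod.ext (by simp only []; omega) (by simp only []; omega)
    have e12 : applyZ G₁ v₂ = (-p, -q - 1) := by
      rw [hv2eq]; simp [applyZ, hG₁def, hp, hq, Prod.ext_iff]; try constructor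
      all_goals first | ring1 | linarith [hxy]
    have e22 : applyZ G₂ v₂ = (p, -q - 1) := by
      rw [hv2eq]; simp [applyZ, hG₂def, hp, hq, Prod.ext_iff]; try constructor
      all_goals first | ring1 | linarith [hxy]
    -- gcd facts
    have g1 : Int.gcd p q = 1 := by
      have := applyZ_prim hu₁ hp1; rw [e11] at this; exact this
    have g2 : Int.gcd p (q + 1) = 1 := by
      have := applyZ_prim hu₁ hp2; rw [e12] at this
      have h' : Int.gcd (-p) (-q - 1) = 1 := this
      rwa [Int.neg_gcd, show -q - 1 = -(q + 1) by ring, Int.gcd_neg] at h'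
    have hpne : p ≠ 0 := by
      intro hp0
      rw [hp0] at g1 g2
      simp [Int.gcd] at g1 g2
      omega
    -- image as explicit triple
    have himg : ∀ G : Matrix (Fin 2) (Fin 2) ℤ,
        Finset.image (applyZ G) {v₁, v₂, v₃} =
          ({applyZ G v₁, applyZ G v₂, applyZ G v₃} : Finset Z2) := by
      intro G; simp [Finset.image_insert]
    rcases lt_or_gt_of_ne hpne with hneg | hpos
    · -- p < 0
      rcases le_or_gt 0 q with hq0 | hq0
      · -- q ≥ 0 : use G₁, k = -p, a = q + 1
        refine ⟨-p, q + 1, by omega, by omega, ?_, ?_, G₁, hu₁, ?_⟩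
        · rwa [Int.neg_gcd]
        · rwa [show q + 1 - 1 = q by ring, Int.neg_gcd]
        · rw [himg, e11, e12, e13]
          simp only [neg_neg, show (q + 1 - 1 : ℤ) = q by ring,
            show (-(q + 1) : ℤ) = -q - 1 by ring]
      · -- q ≤ -1 : use G₂, k = -p, a = -q
        refine ⟨-p, -q, by omega, by omega, ?_, ?_, G₂, hu₂, ?_⟩
        · rwa [Int.neg_gcd, Int.gcd_neg]
        · rwa [Int.neg_gcd, show -q - 1 = -(q + 1) by ring, Int.gcd_neg]
        · rw [himg, e21, e22, e23]
          simp only [neg_neg]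
          rw [Finset.insert_comm]
    · -- p > 0
      rcases le_or_gt 0 q with hq0 | hq0
      · -- q ≥ 0 : use G₂, k = p, a = q + 1
        refine ⟨p, q + 1, by omega, by omega, g2, by rwa [show q + 1 - 1 = q by ring], G₂, hu₂, ?_⟩
        rw [himg, e21, e22, e23]
        simp only [show (q + 1 - 1 : ℤ) = q by ring, show (-(q + 1) : ℤ) = -q - 1 by ring]
      · -- q ≤ -1 : use G₁, k = p, a = -q
        refine ⟨p, -q, by omega, by omega, ?_, ?_, G₁, hu₁, ?_⟩
        · rwa [Int.gcd_neg]
        · rwa [show -q - 1 = -(q + 1) by ring, Int.gcd_neg]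
        · rw [himg, e11, e12, e13]
          simp only [neg_neg]
          rw [Finset.insert_comm]
  · -- backward
    rintro ⟨k, a, hk, ha, _, _, G, hG, hEq⟩
    have hsum1 : (Finset.image (applyZ G) {v₁, v₂, v₃}).sum id =
        ({v₁, v₂, v₃} : Finset Z2).sum (applyZ G) :=
      Finset.sum_image (fun x _ y _ h => applyZ_inj hG h)
    have hne1 : ((-k, a - 1) : Z2) ≠ (k, -a) := by simp [Prod.ext_iff]; omega
    have hne2 : ((-k, a - 1) : Z2) ≠ (0, 1) := by simp [Prod.ext_iff]; omega
    have hne3 : ((k, -a) : Z2) ≠ (0, 1) := by simp [Prod.ext_iff]; omega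
    have hsum2 : (({(-k, a - 1), (k, -a), (0, 1)} : Finset Z2)).sum id = 0 := by
      rw [Finset.sum_insert (by simp [hne1, hne2]),
        Finset.sum_insert (by simp [hne3]), Finset.sum_singleton]
      simp [Prod.ext_iff]
    have hsum3 : ({v₁, v₂, v₃} : Finset Z2).sum (applyZ G) =
        applyZ G v₁ + applyZ G v₂ + applyZ G v₃ := by
      rw [Finset.sum_insert (by simp [h12, h13]),
        Finset.sum_insert (by simp [h23]), Finset.sum_singleton, add_assoc]
    have : applyZ G (v₁ + v₂ + v₃) = 0 := by
      rw [applyZ_add, applyZ_add]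
      rw [hEq, hsum2] at hsum1
      rw [hsum3] at hsum1
      exact hsum1.symm
    exact applyZ_eq_zero hG this
end

section
/- Let P ⊂ ℚ² be a Kähler–Einstein Fano triangle (sum of vertices equals zero). Suppose all three edges of P have the same lattice height h and each edge is long (lattice length ≥ height). Then either P corresponds to ℙ², i.e. P is GL₂(ℤ)-equivalent to conv{(-1,-1),(1,0),(0,1)}, or P corresponds to ℙ²/ℤ₃, i.e. P is GL₂(ℤ)-equivalent to conv{(-1,-1),(2,-1),(-1,2)}. -/
def detZ (u v : Z2) : ℤ := u.1 * v.2 - u.2 * v.1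

lemma toQ_inj : Function.Injective toQ := by
  intro a b hab
  have h1 : ((a.1 : ℚ)) = b.1 := congrArg Prod.fst hab
  have h2 : ((a.2 : ℚ)) = b.2 := congrArg Prod.snd hab
  exact Prod.ext (by exact_mod_cast h1) (by exact_mod_cast h2)

def dotL (u : Z2) : Q2 →ₗ[ℚ] ℚ where
  toFun := dotQ u
  map_add' x y := by simp only [dotQ, Prod.fst_add, Prod.snd_add]; ring
  map_smul' c x := by
    simp only [dotQ, Prod.smul_fst, Prod.smul_snd, smul_eq_mul, RingHom.id_apply]; ring

lemma dotQ_toQ (u v : Z2) : dotQ u (toQ v) = ((u.1 * v.1 + u.2 * v.2 : ℤ) : ℚ) := by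
  simp only [dotQ, toQ]; push_cast; ring

lemma dotQ_comb (u : Z2) (a b : ℚ) (x y : Q2) :
    dotQ u (a • x + b • y) = a * dotQ u x + b * dotQ u y := by
  simp [dotQ, Prod.smul_fst, Prod.smul_snd, smul_eq_mul, Prod.fst_add, Prod.snd_add]; ring

lemma eq_smul_of_rel {w : Z2} (hw : Int.gcd w.1 w.2 = 1) (v : Z2)
    (h : w.1 * v.2 = w.2 * v.1) : ∃ k : ℤ, v.1 = k * w.1 ∧ v.2 = k * w.2 := by
  obtain ⟨p, q, hpq⟩ := Int.isCoprime_iff_gcd_eq_one.2 hw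
  refine ⟨p * v.1 + q * v.2, ?_, ?_⟩
  · linear_combination (-v.1) * hpq + (-q) * h
  · linear_combination (-v.2) * hpq + p * h

lemma interior_no_line {S : Set Q2} (hS : (0 : Q2) ∈ interior S) (u : Z2) (hu : u ≠ 0)
    (hvan : ∀ x ∈ S, dotQ u x = 0) : False := by
  have hnh : S ∈ nhds (0 : Q2) := mem_interior_iff_mem_nhds.1 hS
  have hcont : Continuous (fun t : ℚ => ((t * u.1, t * u.2) : Q2)) := by continuity
  have hpre : (fun t : ℚ => ((t * u.1, t * u.2) : Q2)) ⁻¹' S ∈ nhds (0 : ℚ) := by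
    have := hcont.continuousAt (x := (0:ℚ))
    apply this.preimage_mem_nhds
    convert hnh using 2; simp
  rw [Metric.mem_nhds_iff] at hpre
  obtain ⟨ε, hε, hball⟩ := hpre
  obtain ⟨t, ht0, htε⟩ := exists_rat_btwn (show (0:ℝ) < ε from hε)
  have htmem : t ∈ Metric.ball (0:ℚ) ε := by
    rw [Metric.mem_ball, Rat.dist_eq]
    push_cast
    rw [sub_zero, abs_of_pos ht0]
    exact htε
  have hmem : ((t * u.1, t * u.2) : Q2) ∈ S := hball htmem
  have := hvan _ hmem
  simp only [dotQ] at this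
  have ht0' : (0:ℚ) < t := by exact_mod_cast ht0
  have hsq : (u.1 : ℚ) ^ 2 + (u.2 : ℚ) ^ 2 = 0 := by
    have h2 : t * ((u.1:ℚ)^2 + (u.2:ℚ)^2) = 0 := by linear_combination this
    rcases mul_eq_zero.1 h2 with h | h
    · exact absurd h (ne_of_gt ht0')
    · exact h
  have h1 : (u.1 : ℚ) = 0 := by nlinarith [sq_nonneg (u.1:ℚ), sq_nonneg (u.2:ℚ)]
  have h2 : (u.2 : ℚ) = 0 := by nlinarith [sq_nonneg (u.1:ℚ), sq_nonneg (u.2:ℚ)]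
  exact hu (Prod.ext (by exact_mod_cast h1) (by exact_mod_cast h2))


lemma dotQ_add (u : Z2) (x y : Q2) : dotQ u (x + y) = dotQ u x + dotQ u y := by
  simp only [dotQ, Prod.fst_add, Prod.snd_add]; ring

lemma dotQ_smul (u : Z2) (c : ℚ) (x : Q2) : dotQ u (c • x) = c * dotQ u x := by
  simp only [dotQ, Prod.smul_fst, Prod.smul_snd, smul_eq_mul]; ring

lemma dotQ_isLinear (u : Z2) : IsLinearMap ℚ (dotQ u) :=
  ⟨dotQ_add u, fun c x => by rw [dotQ_smul]; rfl⟩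

lemma edge_arith (p q r : Z2) (hsum : p + q + r = 0)
    (hD : 0 < detZ q r) (h : ℤ)
    (hedges : ∀ E u hh, IsEdge (hull {p, q, r}) E u hh →
      hh = h ∧ hh ≤ (latticeLength E : ℤ)) :
    h * (Int.gcd (r.1 - q.1) (r.2 - q.2) : ℤ) = detZ q r ∧
      h ≤ (Int.gcd (r.1 - q.1) (r.2 - q.2) : ℤ) := by
  have hp1 : p.1 = -q.1 - r.1 := by
    have := congrArg Prod.fst hsum; simp only [Prod.fst_add] at this
    simp at this; linarith
  have hp2 : p.2 = -q.2 - r.2 := by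
    have := congrArg Prod.snd hsum; simp only [Prod.snd_add] at this
    simp at this; linarith
  set w1 : ℤ := r.1 - q.1 with hw1
  set w2 : ℤ := r.2 - q.2 with hw2
  set g : ℕ := Int.gcd w1 w2 with hg
  have hgdvd1 : (g : ℤ) ∣ w1 := Int.gcd_dvd_left _ _
  have hgdvd2 : (g : ℤ) ∣ w2 := Int.gcd_dvd_right _ _
  have hDw : detZ q r = q.1 * w2 - q.2 * w1 := by rw [hw1, hw2]; unfold detZ; ring
  have hgne : g ≠ 0 := by
    intro h0
    rw [hg] at h0
    obtain ⟨hz1, hz2⟩ := Int.gcd_eq_zero_iff.mp h0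
    rw [hDw, hz1, hz2] at hD; simp at hD
  have hgpos : 0 < (g : ℤ) := by exact_mod_cast Nat.pos_of_ne_zero hgne
  obtain ⟨w1', hq1⟩ := hgdvd1
  obtain ⟨w2', hq2⟩ := hgdvd2
  have hw1'div : w1' = w1 / (g : ℤ) := by
    rw [hq1, Int.mul_ediv_cancel_left _ (ne_of_gt hgpos)]
  have hw2'div : w2' = w2 / (g : ℤ) := by
    rw [hq2, Int.mul_ediv_cancel_left _ (ne_of_gt hgpos)]
  have hprim' : Int.gcd w1' w2' = 1 := by
    rw [hw1'div, hw2'div]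
    exact Int.gcd_div_gcd_div_gcd (Nat.pos_of_ne_zero hgne)
  set hh : ℤ := w2' * q.1 - w1' * q.2 with hhdef
  have hhh : (g : ℤ) * hh = detZ q r := by
    rw [hhdef, hDw]; linear_combination q.1 * hq2.symm - q.2 * hq1.symm
  have hhpos : 0 < hh := by
    rcases lt_trichotomy hh 0 with hlt | heq | hgt
    · nlinarith
    · rw [heq] at hhh; simp at hhh; omega
    · exact hgt
  -- integer dot identities
  have I1 : -w2' * q.1 + w1' * q.2 = -hh := by rw [hhdef]; ring
  have I2 : -w2' * r.1 + w1' * r.2 = -hh := by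
    apply mul_left_cancel₀ (ne_of_gt hgpos)
    have key_r : -w2 * r.1 + w1 * r.2 = -detZ q r := by rw [hw1, hw2]; unfold detZ; ring
    calc (g:ℤ) * (-w2' * r.1 + w1' * r.2) = -w2 * r.1 + w1 * r.2 := by
          rw [hq1, hq2]; ring
      _ = -detZ q r := key_r
      _ = (g:ℤ) * (-hh) := by rw [← hhh]; ring
  have I3 : -w2' * p.1 + w1' * p.2 = 2 * hh := by
    apply mul_left_cancel₀ (ne_of_gt hgpos)
    have key_p : -w2 * p.1 + w1 * p.2 = 2 * detZ q r := by
      rw [hw1, hw2]; unfold detZ; rw [hp1, hp2]; ring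
    calc (g:ℤ) * (-w2' * p.1 + w1' * p.2) = -w2 * p.1 + w1 * p.2 := by
          rw [hq1, hq2]; ring
      _ = 2 * detZ q r := key_p
      _ = (g:ℤ) * (2 * hh) := by rw [← hhh]; ring
  set u : Z2 := (-w2', w1') with hu
  have hufst : u.1 = -w2' := rfl
  have husnd : u.2 = w1' := rfl
  have dp : dotQ u (toQ p) = 2 * (hh : ℚ) := by
    rw [dotQ_toQ, hufst, husnd]; exact_mod_cast congrArg (Int.cast : ℤ → ℚ) I3
  have dq : dotQ u (toQ q) = -(hh : ℚ) := by
    rw [dotQ_toQ, hufst, husnd]; exact_mod_cast congrArg (Int.cast : ℤ → ℚ) I1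
  have dr : dotQ u (toQ r) = -(hh : ℚ) := by
    rw [dotQ_toQ, hufst, husnd]; exact_mod_cast congrArg (Int.cast : ℤ → ℚ) I2
  have hqr : q ≠ r := by
    rintro rfl
    have : detZ q q = 0 := by unfold detZ; ring
    omega
  have hvertsub : toQ '' ((({p, q, r} : Finset Z2)) : Set Z2)
      = {toQ p, toQ q, toQ r} := by
    simp [Set.image_insert_eq]
  set P : Set Q2 := hull {p, q, r} with hP
  have memq : toQ q ∈ P := by
    rw [hP]; unfold hull
    exact subset_convexHull ℚ _ ⟨q, by simp, rfl⟩
  have memr : toQ r ∈ P := by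
    rw [hP]; unfold hull
    exact subset_convexHull ℚ _ ⟨r, by simp, rfl⟩
  have hhalf : ∀ x ∈ P, -(hh : ℚ) ≤ dotQ u x := by
    have hsub : P ⊆ {y : Q2 | -(hh : ℚ) ≤ dotQ u y} := by
      rw [hP]; unfold hull
      apply convexHull_min _ (convex_halfSpace_ge (dotQ_isLinear u) _)
      rw [hvertsub]
      intro y hy
      simp only [Set.mem_insert_iff, Set.mem_singleton_iff] at hy
      rcases hy with rfl | rfl | rfl
      · rw [Set.mem_setOf_eq, dp]
        have : (0:ℚ) < (hh:ℚ) := by exact_mod_cast hhpos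
        linarith
      · rw [Set.mem_setOf_eq, dq]
      · rw [Set.mem_setOf_eq, dr]
    intro x hx; exact hsub hx
  set E : Set Q2 := {x ∈ P | dotQ u x = -(hh : ℚ)} with hE
  have hprimu : IsPrimitive u := by
    unfold IsPrimitive
    rw [hufst, husnd, Int.neg_gcd, Int.gcd_comm]
    exact hprim'
  have hedge : IsEdge P E u hh := by
    refine ⟨hprimu, hhpos, hhalf, hE, toQ q, toQ r, ?_, ?_, ?_⟩
    · rw [hE]; exact ⟨memq, dq⟩
    · rw [hE]; exact ⟨memr, dr⟩
    · intro hc; exact hqr (toQ_inj hc)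
  obtain ⟨hheq, hlen⟩ := hedges E u hh hedge
  -- bound on lattice points of E
  obtain ⟨s, t, hst⟩ := Int.isCoprime_iff_gcd_eq_one.2 hprim'
  have hull_eq : P = convexJoin ℚ {toQ p} (segment ℚ (toQ q) (toQ r)) := by
    rw [hP]; unfold hull
    rw [hvertsub]
    have h1 : ({toQ p, toQ q, toQ r} : Set Q2) = insert (toQ p) {toQ q, toQ r} := rfl
    rw [h1, convexHull_insert (by simp : ({toQ q, toQ r} : Set Q2).Nonempty), convexHull_pair]
  have hsubset : {v : Z2 | toQ v ∈ E} ⊆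
      (fun k : ℤ => ((q.1 + k * w1', q.2 + k * w2') : Z2)) '' (Set.Icc 0 (g : ℤ)) := by
    intro v hv
    rw [Set.mem_setOf_eq, hE] at hv
    obtain ⟨hvP, hvdot⟩ := hv
    have hint : -w2' * v.1 + w1' * v.2 = -hh := by
      rw [dotQ_toQ, hufst, husnd] at hvdot
      exact_mod_cast hvdot
    obtain ⟨k, hk1, hk2⟩ := eq_smul_of_rel (w := (w1', w2')) hprim' (v.1 - q.1, v.2 - q.2)
      (by simp only; linear_combination hint - I1)
    simp only at hk1 hk2
    -- decompose hvP
    rw [hull_eq, mem_convexJoin] at hvP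
    obtain ⟨x, hx, z, hz, hseg⟩ := hvP
    rw [Set.mem_singleton_iff] at hx
    subst hx
    obtain ⟨a, b, ha, hb, hab, hcomb⟩ := hseg
    obtain ⟨c, d, hc, hd, hcd, hzcomb⟩ := hz
    have hdotz : dotQ u z = -(hh : ℚ) := by
      rw [← hzcomb, dotQ_comb, dq, dr]; linear_combination (-(hh:ℚ)) * hcd
    have hdotv : dotQ u (toQ v) = -(hh : ℚ) := hvdot
    have hdcomb : dotQ u (toQ v) = a * (2 * (hh:ℚ)) + b * (-(hh:ℚ)) := by
      rw [← hcomb, dotQ_comb, dp, hdotz]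
    have hhQpos : (0:ℚ) < (hh : ℚ) := by exact_mod_cast hhpos
    have ha0 : a = 0 := by nlinarith [hdcomb.symm.trans hdotv]
    have hb1 : b = 1 := by linarith
    have hzv : z = toQ v := by
      rw [ha0, hb1] at hcomb; simpa using hcomb
    -- apply the Bezout functional
    have hF : dotQ (s, t) z = c * dotQ (s, t) (toQ q) + d * dotQ (s, t) (toQ r) := by
      rw [← hzcomb, dotQ_comb]
    rw [hzv] at hF
    have hFq : dotQ (s, t) (toQ q) = ((s * q.1 + t * q.2 : ℤ) : ℚ) := by
      rw [dotQ_toQ]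
    have hFr : dotQ (s, t) (toQ r) = ((s * q.1 + t * q.2 + g : ℤ) : ℚ) := by
      rw [dotQ_toQ]
      have : s * r.1 + t * r.2 = s * q.1 + t * q.2 + g := by
        have hr1 : r.1 = q.1 + w1 := by rw [hw1]; ring
        have hr2 : r.2 = q.2 + w2 := by rw [hw2]; ring
        rw [hr1, hr2, hq1, hq2]; linear_combination (g:ℤ) * hst
      rw [this]
    have hFv : dotQ (s, t) (toQ v) = ((s * q.1 + t * q.2 + k : ℤ) : ℚ) := by
      rw [dotQ_toQ]
      have hv1 : v.1 = q.1 + k * w1' := by linarith [hk1]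
      have hv2 : v.2 = q.2 + k * w2' := by linarith [hk2]
      rw [hv1, hv2]
      have : s * (q.1 + k * w1') + t * (q.2 + k * w2') = s * q.1 + t * q.2 + k := by
        linear_combination k * hst
      rw [this]
    rw [hFv, hFq, hFr] at hF
    have hgQ : (0:ℚ) ≤ (g : ℚ) := by positivity
    have hkd : (k : ℚ) = d * (g : ℚ) := by
      push_cast at hF
      linear_combination hF + ((s:ℚ) * (q.1:ℚ) + (t:ℚ) * (q.2:ℚ)) * hcd
    have hk0 : 0 ≤ k := by
      have : (0:ℚ) ≤ (k:ℚ) := by rw [hkd]; exact mul_nonneg hd hgQ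
      exact_mod_cast this
    have hkg : k ≤ (g : ℤ) := by
      have hd1 : d ≤ 1 := by linarith
      have : (k:ℚ) ≤ (g:ℚ) := by rw [hkd]; nlinarith
      exact_mod_cast this
    exact ⟨k, Set.mem_Icc.mpr ⟨hk0, hkg⟩,
      Prod.ext (by dsimp only; linarith [hk1]) (by dsimp only; linarith [hk2])⟩
  have hfinIcc : (Set.Icc (0:ℤ) (g:ℤ)).Finite := Set.finite_Icc _ _
  have hcount : Set.ncard {v : Z2 | toQ v ∈ E} ≤ g + 1 := by
    calc Set.ncard {v : Z2 | toQ v ∈ E}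
        ≤ Set.ncard ((fun k : ℤ => ((q.1 + k * w1', q.2 + k * w2') : Z2)) ''
            (Set.Icc 0 (g:ℤ))) := Set.ncard_le_ncard hsubset (hfinIcc.image _)
      _ ≤ (Set.Icc (0:ℤ) (g:ℤ)).ncard := Set.ncard_image_le hfinIcc
      _ = g + 1 := by
          rw [← Finset.coe_Icc, Set.ncard_coe_finset, Int.card_Icc]
          omega
  have hlatt : (latticeLength E : ℤ) ≤ (g : ℤ) := by
    unfold latticeLength
    omega
  constructor
  · linear_combination hhh - (g:ℤ) * hheq
  · omega

abbrev Mat2 := Matrix (Fin 2) (Fin 2) ℤ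


lemma applyZ_mul (A B : Mat2) (v : Z2) : applyZ (A * B) v = applyZ A (applyZ B v) := by
  unfold applyZ
  simp only [Matrix.mul_apply, Fin.sum_univ_two]
  exact Prod.ext (by dsimp; ring) (by dsimp; ring)

lemma applyM_toQ (G : Mat2) (v : Z2) : applyM G (toQ v) = toQ (applyZ G v) := by
  unfold applyM applyZ toQ
  exact Prod.ext (by dsimp; push_cast; ring) (by dsimp; push_cast; ring)

lemma gcd_dvd_applyZ (G : Mat2) (v : Z2) :
    Int.gcd v.1 v.2 ∣ Int.gcd (applyZ G v).1 (applyZ G v).2 := by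
  have h1 : ((Int.gcd v.1 v.2 : ℤ)) ∣ (applyZ G v).1 :=
    dvd_add ((Int.gcd_dvd_left _ _).mul_left _) ((Int.gcd_dvd_right _ _).mul_left _)
  have h2 : ((Int.gcd v.1 v.2 : ℤ)) ∣ (applyZ G v).2 :=
    dvd_add ((Int.gcd_dvd_left _ _).mul_left _) ((Int.gcd_dvd_right _ _).mul_left _)
  exact Int.natCast_dvd_natCast.mp (Int.dvd_coe_gcd h1 h2)

lemma applyZ_inv (G : Mat2) (hG : G.det = 1) (v : Z2) :
    applyZ !![G 1 1, -(G 0 1); -(G 1 0), G 0 0] (applyZ G v) = v := by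
  have hd := hG
  rw [Matrix.det_fin_two] at hd
  unfold applyZ
  simp only [Matrix.cons_val', Matrix.cons_val_zero, Matrix.cons_val_one, Matrix.head_cons,
    Matrix.empty_val', Matrix.cons_val_fin_one, Matrix.head_fin_const]
  exact Prod.ext (by dsimp; linear_combination v.1 * hd) (by dsimp; linear_combination v.2 * hd)

lemma gcd_applyZ (G : Mat2) (hG : G.det = 1) (v : Z2) :
    Int.gcd (applyZ G v).1 (applyZ G v).2 = Int.gcd v.1 v.2 := by
  apply Nat.dvd_antisymm
  · conv_rhs => rw [← applyZ_inv G hG v]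
    exact gcd_dvd_applyZ _ _
  · exact gcd_dvd_applyZ G v

lemma applyZ_sub (G : Mat2) (a b : Z2) : applyZ G (a - b) = applyZ G a - applyZ G b := by
  have h1 : (a - b).1 = a.1 - b.1 := rfl
  have h2 : (a - b).2 = a.2 - b.2 := rfl
  unfold applyZ
  rw [h1, h2]
  exact Prod.ext (by dsimp; ring) (by dsimp; ring)

lemma detZ_applyZ (G : Mat2) (a b : Z2) :
    detZ (applyZ G a) (applyZ G b) = G.det * detZ a b := by
  rw [Matrix.det_fin_two]; unfold detZ applyZ; dsimp; ring

lemma exists_norm (v : Z2) (hv : IsPrimitive v) :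
    ∃ G : Mat2, G.det = 1 ∧ applyZ G v = (1, 0) := by
  obtain ⟨c, d, hcd⟩ := Int.isCoprime_iff_gcd_eq_one.2 hv
  refine ⟨!![c, d; -v.2, v.1], ?_, ?_⟩
  · rw [Matrix.det_fin_two_of]
    linear_combination hcd
  · unfold applyZ
    simp only [Matrix.cons_val_zero, Matrix.cons_val_one, Matrix.head_cons, Matrix.cons_val',
      Matrix.empty_val', Matrix.cons_val_fin_one, Matrix.head_fin_const, Matrix.of_apply]
    exact Prod.ext (by dsimp; linear_combination hcd) (by dsimp; ring)

lemma classify_core (a b h : ℤ) (hb : 0 < b) (hab : Int.gcd a b = 1)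
    (e0 : h * (Int.gcd (-1 - a - a) (-b - b) : ℤ) = b)
    (l0 : h ≤ (Int.gcd (-1 - a - a) (-b - b) : ℤ))
    (e1 : h * (Int.gcd (1 - (-1 - a)) (0 - -b) : ℤ) = b)
    (l1 : h ≤ (Int.gcd (1 - (-1 - a)) (0 - -b) : ℤ))
    (e2 : h * (Int.gcd (a - 1) (b - 0) : ℤ) = b)
    (l2 : h ≤ (Int.gcd (a - 1) (b - 0) : ℤ)) :
    b = 1 ∨ (b = 3 ∧ (3:ℤ) ∣ (a - 1)) := by
  set g0N : ℕ := Int.gcd (-1 - a - a) (-b - b) with hg0N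
  set g1N : ℕ := Int.gcd (1 - (-1 - a)) (0 - -b) with hg1N
  set g2N : ℕ := Int.gcd (a - 1) (b - 0) with hg2N
  have hg2nn : (0:ℤ) ≤ (g2N : ℤ) := Int.natCast_nonneg _
  have hh0 : 0 < h := by nlinarith
  have hgeq0 : (g0N : ℤ) = (g2N : ℤ) :=
    mul_left_cancel₀ (ne_of_gt hh0) (e0.trans e2.symm)
  have hgeq1 : (g1N : ℤ) = (g2N : ℤ) :=
    mul_left_cancel₀ (ne_of_gt hh0) (e1.trans e2.symm)
  have d2a : (g2N : ℤ) ∣ (a - 1) := Int.gcd_dvd_left _ _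
  have d2b : (g2N : ℤ) ∣ b := by
    have h0 : b = b - 0 := (sub_zero b).symm
    rw [h0]
    exact Int.gcd_dvd_right _ _
  have d1a : (g2N : ℤ) ∣ (a + 2) := by
    have := (Int.gcd_dvd_left _ _ : (g1N : ℤ) ∣ (1 - (-1 - a)))
    rw [hgeq1] at this
    have h' : 1 - (-1 - a) = a + 2 := by ring
    rwa [h'] at this
  have d3 : (g2N : ℤ) ∣ 3 := by
    have := dvd_sub d1a d2a
    have h' : a + 2 - (a - 1) = 3 := by ring
    rwa [h'] at this
  have d3N : g2N ∣ 3 := by exact_mod_cast d3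
  rcases (Nat.prime_three.eq_one_or_self_of_dvd g2N d3N) with hg2 | hg2
  · -- g = 1 : b = 1
    rw [hg2] at e2 l2
    left; omega
  · -- g = 3
    rw [hg2] at e2 l2 hgeq0 hgeq1
    push_cast at e2 l2 hgeq0 hgeq1
    -- b = 3h, h ≤ 3
    interval_cases h
    · -- h = 1, b = 3
      right
      refine ⟨by omega, ?_⟩
      have : (g2N : ℤ) ∣ (a - 1) := d2a
      rw [hg2] at this; exact_mod_cast this
    · -- h = 2, b = 6
      exfalso
      have hb6 : b = 6 := by omega
      have hna : ¬ (2:ℤ) ∣ (a - 1) := by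
        intro hdvd
        have : (2:ℤ) ∣ (g2N : ℤ) := Int.dvd_coe_gcd hdvd (by rw [hb6]; norm_num)
        rw [hg2] at this; norm_num at this
      have h2a : (2:ℤ) ∣ a := by omega
      have : (2:ℤ) ∣ (Int.gcd a b : ℤ) := Int.dvd_coe_gcd h2a (by rw [hb6]; norm_num)
      rw [hab] at this; norm_num at this
    · -- h = 3, b = 9
      exfalso
      have hb9 : b = 9 := by omega
      have A : (3:ℤ) ∣ (a - 1) := by
        have := d2a; rw [hg2] at this; exact_mod_cast this
      have B : ¬ (9:ℤ) ∣ (a - 1) := by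
        intro hdvd
        have : (9:ℤ) ∣ (g2N : ℤ) := Int.dvd_coe_gcd hdvd (by rw [hb9]; norm_num)
        rw [hg2] at this; norm_num at this
      have C : ¬ (9:ℤ) ∣ (a + 2) := by
        intro hdvd
        have : (9:ℤ) ∣ (g1N : ℤ) :=
          Int.dvd_coe_gcd (by rw [show (1 - (-1 - a)) = a + 2 by ring]; exact hdvd)
            (by rw [hb9]; norm_num)
        rw [hgeq1] at this; norm_num at this
      have D : ¬ (9:ℤ) ∣ (-1 - a - a) := by
        intro hdvd
        have : (9:ℤ) ∣ (g0N : ℤ) := Int.dvd_coe_gcd hdvd (by rw [hb9]; norm_num)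
        rw [hgeq0] at this; norm_num at this
      have h9 : a % 9 = 1 ∨ a % 9 = 4 ∨ a % 9 = 7 := by omega
      rcases h9 with h9 | h9 | h9
      · exact B (by omega)
      · exact D (by omega)
      · exact C (by omega)

lemma applyZ_zero (G : Mat2) : applyZ G 0 = 0 := by
  unfold applyZ
  exact Prod.ext (by dsimp; ring) (by dsimp; ring)

lemma classify (v₀ v₁ v₂ : Z2) (hsum : v₀ + v₁ + v₂ = 0)
    (hp0 : IsPrimitive v₀) (hp1 : IsPrimitive v₁) (h : ℤ)
    (hD : 0 < detZ v₀ v₁)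
    (e0 : h * (Int.gcd (v₂ - v₁).1 (v₂ - v₁).2 : ℤ) = detZ v₀ v₁)
    (l0 : h ≤ (Int.gcd (v₂ - v₁).1 (v₂ - v₁).2 : ℤ))
    (e1 : h * (Int.gcd (v₀ - v₂).1 (v₀ - v₂).2 : ℤ) = detZ v₀ v₁)
    (l1 : h ≤ (Int.gcd (v₀ - v₂).1 (v₀ - v₂).2 : ℤ))
    (e2 : h * (Int.gcd (v₁ - v₀).1 (v₁ - v₀).2 : ℤ) = detZ v₀ v₁)
    (l2 : h ≤ (Int.gcd (v₁ - v₀).1 (v₁ - v₀).2 : ℤ)) :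
    ∃ G : Mat2, G.det = 1 ∧
      ((applyZ G v₀ = (1, 0) ∧ applyZ G v₁ = (0, 1) ∧ applyZ G v₂ = (-1, -1)) ∨
       (applyZ G v₀ = (-1, -1) ∧ applyZ G v₁ = (2, -1) ∧ applyZ G v₂ = (-1, 2))) := by
  obtain ⟨G₁, hG₁det, hG₁v₀⟩ := exists_norm v₀ hp0
  set a : ℤ := (applyZ G₁ v₁).1 with ha
  set b : ℤ := (applyZ G₁ v₁).2 with hb
  have hw1 : applyZ G₁ v₁ = (a, b) := rfl
  have hdet1 : detZ (applyZ G₁ v₀) (applyZ G₁ v₁) = detZ v₀ v₁ := by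
    rw [detZ_applyZ, hG₁det, one_mul]
  have hbD : b = detZ v₀ v₁ := by
    rw [← hdet1, hG₁v₀, hw1]; unfold detZ; dsimp; ring
  have hv₂ : v₂ = (0 : Z2) - v₀ - v₁ := by
    rw [← hsum]; ring
  have hw2 : applyZ G₁ v₂ = (-1 - a, -b) := by
    rw [hv₂, applyZ_sub, applyZ_sub, applyZ_zero, hG₁v₀, hw1]
    exact Prod.ext (by dsimp; try ring) (by dsimp; try ring)
  -- transported data
  have hg2 : Int.gcd (v₁ - v₀).1 (v₁ - v₀).2 = Int.gcd (a - 1) (b - 0) := by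
    rw [← gcd_applyZ G₁ hG₁det (v₁ - v₀), applyZ_sub, hw1, hG₁v₀]; rfl
  have hg1 : Int.gcd (v₀ - v₂).1 (v₀ - v₂).2 = Int.gcd (1 - (-1 - a)) (0 - -b) := by
    rw [← gcd_applyZ G₁ hG₁det (v₀ - v₂), applyZ_sub, hw2, hG₁v₀]; rfl
  have hg0 : Int.gcd (v₂ - v₁).1 (v₂ - v₁).2 = Int.gcd (-1 - a - a) (-b - b) := by
    rw [← gcd_applyZ G₁ hG₁det (v₂ - v₁), applyZ_sub, hw2, hw1]; rfl
  have hab : Int.gcd a b = 1 := by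
    have := gcd_applyZ G₁ hG₁det v₁
    rw [hw1] at this
    rw [← hp1]  -- IsPrimitive v₁ : gcd = 1
    exact this
  have hbpos : 0 < b := by rw [hbD]; exact hD
  rw [hg0] at e0 l0
  rw [hg1] at e1 l1
  rw [hg2] at e2 l2
  rw [← hbD] at e0 e1 e2
  rcases classify_core a b h hbpos hab e0 l0 e1 l1 e2 l2 with hb1 | ⟨hb3, hdvd⟩
  · -- P² case
    refine ⟨!![1, -a; 0, 1] * G₁, ?_, Or.inl ⟨?_, ?_, ?_⟩⟩
    · rw [Matrix.det_mul, hG₁det, Matrix.det_fin_two_of]; ring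
    · rw [applyZ_mul, hG₁v₀]
      unfold applyZ
      simp only [Matrix.cons_val_zero, Matrix.cons_val_one, Matrix.head_cons, Matrix.cons_val',
        Matrix.empty_val', Matrix.cons_val_fin_one, Matrix.head_fin_const, Matrix.of_apply]
      exact Prod.ext (by dsimp; try ring) (by dsimp; try ring)
    · rw [applyZ_mul, hw1, hb1]
      unfold applyZ
      simp only [Matrix.cons_val_zero, Matrix.cons_val_one, Matrix.head_cons, Matrix.cons_val',
        Matrix.empty_val', Matrix.cons_val_fin_one, Matrix.head_fin_const, Matrix.of_apply]
      exact Prod.ext (by dsimp; try ring) (by dsimp; try ring)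
    · rw [applyZ_mul, hw2, hb1]
      unfold applyZ
      simp only [Matrix.cons_val_zero, Matrix.cons_val_one, Matrix.head_cons, Matrix.cons_val',
        Matrix.empty_val', Matrix.cons_val_fin_one, Matrix.head_fin_const, Matrix.of_apply]
      exact Prod.ext (by dsimp; try ring) (by dsimp; try ring)
  · -- P²/ℤ₃ case
    obtain ⟨m, hm⟩ := hdvd
    refine ⟨!![-1, m + 1; -1, m] * G₁, ?_, Or.inr ⟨?_, ?_, ?_⟩⟩
    · rw [Matrix.det_mul, hG₁det, Matrix.det_fin_two_of]; ring
    · rw [applyZ_mul, hG₁v₀]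
      unfold applyZ
      simp only [Matrix.cons_val_zero, Matrix.cons_val_one, Matrix.head_cons, Matrix.cons_val',
        Matrix.empty_val', Matrix.cons_val_fin_one, Matrix.head_fin_const, Matrix.of_apply]
      exact Prod.ext (by dsimp; try ring) (by dsimp; try ring)
    · rw [applyZ_mul, hw1, hb3]
      unfold applyZ
      simp only [Matrix.cons_val_zero, Matrix.cons_val_one, Matrix.head_cons, Matrix.cons_val',
        Matrix.empty_val', Matrix.cons_val_fin_one, Matrix.head_fin_const, Matrix.of_apply]
      exact Prod.ext (by dsimp; linear_combination -hm) (by dsimp; linear_combination -hm)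
    · rw [applyZ_mul, hw2, hb3]
      unfold applyZ
      simp only [Matrix.cons_val_zero, Matrix.cons_val_one, Matrix.head_cons, Matrix.cons_val',
        Matrix.empty_val', Matrix.cons_val_fin_one, Matrix.head_fin_const, Matrix.of_apply]
      exact Prod.ext (by dsimp; linear_combination hm) (by dsimp; linear_combination hm)


def appL (G : Mat2) : Q2 →ₗ[ℚ] Q2 where
  toFun := applyM G
  map_add' x y := by
    unfold applyM
    exact Prod.ext
      (by simp only [Prod.fst_add, Prod.snd_add]; ring)
      (by simp only [Prod.fst_add, Prod.snd_add]; ring)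
  map_smul' c x := by
    unfold applyM
    exact Prod.ext
      (by simp only [Prod.smul_fst, Prod.smul_snd, smul_eq_mul, RingHom.id_apply]; ring)
      (by simp only [Prod.smul_fst, Prod.smul_snd, smul_eq_mul, RingHom.id_apply]; ring)

lemma applyM_image_hull (G : Mat2) (V : Finset Z2) :
    applyM G '' hull V = convexHull ℚ (applyM G '' (toQ '' (V : Set Z2))) := by
  unfold hull
  exact (appL G).image_convexHull _

lemma key (v₀ v₁ v₂ : Z2) (hF : IsFanoPolygon {v₀, v₁, v₂}) (hKE : v₀ + v₁ + v₂ = 0) (h : ℤ)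
    (hD : 0 < detZ v₀ v₁)
    (hedges : ∀ E u hh, IsEdge (hull {v₀, v₁, v₂}) E u hh →
      hh = h ∧ hh ≤ (latticeLength E : ℤ)) :
    ∃ G : Mat2, IsUnit G.det ∧
      (applyM G '' hull {v₀, v₁, v₂} =
          convexHull ℚ ({(-1, -1), (1, 0), (0, 1)} : Set Q2) ∨
        applyM G '' hull {v₀, v₁, v₂} =
          convexHull ℚ ({(-1, -1), (2, -1), (-1, 2)} : Set Q2)) := by
  have hp0 : IsPrimitive v₀ := hF.2.1 v₀ (by simp)
  have hp1 : IsPrimitive v₁ := hF.2.1 v₁ (by simp)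
  have h1 : v₀.1 + v₁.1 + v₂.1 = 0 := by
    have := congrArg Prod.fst hKE; simpa using this
  have h2 : v₀.2 + v₁.2 + v₂.2 = 0 := by
    have := congrArg Prod.snd hKE; simpa using this
  have hd12 : detZ v₁ v₂ = detZ v₀ v₁ := by
    unfold detZ; linear_combination v₁.1 * h2 - v₁.2 * h1
  have hd20 : detZ v₂ v₀ = detZ v₀ v₁ := by
    unfold detZ; linear_combination v₀.2 * h1 - v₀.1 * h2
  have hs120 : ({v₁, v₂, v₀} : Finset Z2) = {v₀, v₁, v₂} := by
    ext x; simp only [Finset.mem_insert, Finset.mem_singleton]; tauto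
  have hs201 : ({v₂, v₀, v₁} : Finset Z2) = {v₀, v₁, v₂} := by
    ext x; simp only [Finset.mem_insert, Finset.mem_singleton]; tauto
  have hsum120 : v₁ + v₂ + v₀ = 0 := by rw [← hKE]; ring
  have hsum201 : v₂ + v₀ + v₁ = 0 := by rw [← hKE]; ring
  obtain ⟨e0, l0⟩ := edge_arith v₀ v₁ v₂ hKE (by rw [hd12]; exact hD) h hedges
  obtain ⟨e1, l1⟩ := edge_arith v₁ v₂ v₀ hsum120 (by rw [hd20]; exact hD) h
    (fun E u hh hE => hedges E u hh (by
      rwa [show hull {v₁, v₂, v₀} = hull {v₀, v₁, v₂} from congrArg hull hs120] at hE))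
  obtain ⟨e2, l2⟩ := edge_arith v₂ v₀ v₁ hsum201 hD h
    (fun E u hh hE => hedges E u hh (by
      rwa [show hull {v₂, v₀, v₁} = hull {v₀, v₁, v₂} from congrArg hull hs201] at hE))
  rw [hd12] at e0
  rw [hd20] at e1
  obtain ⟨G, hGdet, hcase⟩ := classify v₀ v₁ v₂ hKE hp0 hp1 h hD e0 l0 e1 l1 e2 l2
  refine ⟨G, by rw [hGdet]; exact isUnit_one, ?_⟩
  have himg : applyM G '' hull {v₀, v₁, v₂} =
      convexHull ℚ {toQ (applyZ G v₀), toQ (applyZ G v₁), toQ (applyZ G v₂)} := by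
    rw [applyM_image_hull]
    congr 1
    rw [show (toQ '' ((({v₀, v₁, v₂} : Finset Z2)) : Set Z2)) = {toQ v₀, toQ v₁, toQ v₂} from
      by simp [Set.image_insert_eq]]
    rw [Set.image_insert_eq, Set.image_insert_eq, Set.image_singleton,
      applyM_toQ, applyM_toQ, applyM_toQ]
  rcases hcase with ⟨c0, c1, c2⟩ | ⟨c0, c1, c2⟩
  · left
    rw [himg, c0, c1, c2]
    congr 1
    have t0 : toQ ((1:ℤ), (0:ℤ)) = ((1:ℚ), (0:ℚ)) := by unfold toQ; norm_num
    have t1 : toQ ((0:ℤ), (1:ℤ)) = ((0:ℚ), (1:ℚ)) := by unfold toQ; norm_num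
    have t2 : toQ ((-1:ℤ), (-1:ℤ)) = ((-1:ℚ), (-1:ℚ)) := by unfold toQ; norm_num
    rw [t0, t1, t2]
    ext x
    simp only [Set.mem_insert_iff, Set.mem_singleton_iff]
    tauto
  · right
    rw [himg, c0, c1, c2]
    have t0 : toQ (-1, -1) = ((-1:ℚ), (-1:ℚ)) := by unfold toQ; norm_num
    have t1 : toQ (2, -1) = ((2:ℚ), (-1:ℚ)) := by unfold toQ; norm_num
    have t2 : toQ (-1, 2) = ((-1:ℚ), (2:ℚ)) := by unfold toQ; norm_num
    rw [t0, t1, t2]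

/-- A Kähler–Einstein Fano triangle all of whose edges have the same height and are long
is `GL₂(ℤ)`-equivalent to the triangle of `ℙ²` or to the triangle of `ℙ²/ℤ₃`. -/
theorem stmt_3 (v₀ v₁ v₂ : Z2) (hcard : ({v₀, v₁, v₂} : Finset Z2).card = 3)
    (hF : IsFanoPolygon {v₀, v₁, v₂}) (hKE : v₀ + v₁ + v₂ = 0) (h : ℤ)
    (hedges : ∀ E u hh, IsEdge (hull {v₀, v₁, v₂}) E u hh →
      hh = h ∧ hh ≤ (latticeLength E : ℤ)) :
    ∃ G : Matrix (Fin 2) (Fin 2) ℤ, IsUnit G.det ∧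
      (applyM G '' hull {v₀, v₁, v₂} =
          convexHull ℚ ({(-1, -1), (1, 0), (0, 1)} : Set Q2) ∨
        applyM G '' hull {v₀, v₁, v₂} =
          convexHull ℚ ({(-1, -1), (2, -1), (-1, 2)} : Set Q2)) := by
  have h1 : v₀.1 + v₁.1 + v₂.1 = 0 := by
    have := congrArg Prod.fst hKE; simpa using this
  have h2 : v₀.2 + v₁.2 + v₂.2 = 0 := by
    have := congrArg Prod.snd hKE; simpa using this
  rcases lt_trichotomy (detZ v₀ v₁) 0 with hneg | hzero | hpos
  · -- negative orientation: swap v₁ and v₂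
    have hsEq : ({v₀, v₂, v₁} : Finset Z2) = {v₀, v₁, v₂} := by
      ext x; simp only [Finset.mem_insert, Finset.mem_singleton]; tauto
    have hD' : 0 < detZ v₀ v₂ := by
      have : detZ v₀ v₂ = -detZ v₀ v₁ := by
        unfold detZ; linear_combination v₀.1 * h2 - v₀.2 * h1
      omega
    have hKE' : v₀ + v₂ + v₁ = 0 := by rw [← hKE]; ring
    have hF' : IsFanoPolygon {v₀, v₂, v₁} := by rwa [hsEq]
    have hhull : hull {v₀, v₂, v₁} = hull {v₀, v₁, v₂} := congrArg hull hsEq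
    obtain ⟨G, hG, hc⟩ := key v₀ v₂ v₁ hF' hKE' h hD'
      (fun E u hh hE => hedges E u hh (by rwa [hhull] at hE))
    refine ⟨G, hG, ?_⟩
    rwa [hhull] at hc
  · -- degenerate: contradiction with interior
    exfalso
    have hp0 : IsPrimitive v₀ := hF.2.1 v₀ (by simp)
    have hv₀ne : v₀ ≠ 0 := by
      intro h0
      rw [h0] at hp0
      unfold IsPrimitive at hp0
      simp [Int.gcd] at hp0
    set u : Z2 := (-v₀.2, v₀.1) with hu
    have hune : u ≠ 0 := by
      intro h0
      apply hv₀ne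
      have ha := congrArg Prod.fst h0
      have hb := congrArg Prod.snd h0
      simp [hu] at ha hb
      exact Prod.ext hb ha
    apply interior_no_line hF.1 u hune
    intro x hx
    have hsub : hull {v₀, v₁, v₂} ⊆ {y : Q2 | dotQ u y = 0} := by
      unfold hull
      apply convexHull_min _ (convex_hyperplane (dotQ_isLinear u) 0)
      rw [show (toQ '' ((({v₀, v₁, v₂} : Finset Z2)) : Set Z2)) = {toQ v₀, toQ v₁, toQ v₂} from
        by simp [Set.image_insert_eq]]
      intro y hy
      simp only [Set.mem_insert_iff, Set.mem_singleton_iff] at hy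
      have hz : v₀.1 * v₁.2 - v₀.2 * v₁.1 = 0 := hzero
      have hu1 : u.1 = -v₀.2 := rfl
      have hu2 : u.2 = v₀.1 := rfl
      rcases hy with rfl | rfl | rfl
      · rw [Set.mem_setOf_eq, dotQ_toQ, hu1, hu2]
        norm_cast
        ring
      · rw [Set.mem_setOf_eq, dotQ_toQ, hu1, hu2]
        norm_cast
        linear_combination hz
      · rw [Set.mem_setOf_eq, dotQ_toQ, hu1, hu2]
        norm_cast
        linear_combination (-v₀.2) * h1 + v₀.1 * h2 - hz
    exact hsub hx
  · exact key v₀ v₁ v₂ hF hKE h hpos hedges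
end

section
/- Let P ⊂ ℚ² be a Kähler–Einstein Fano triangle of index k, i.e. P has weights (1,1,1) and k = [ℤ² : N_P] where N_P is the sublattice of ℤ² generated by the vertices of P. Then k is odd. -/
/-!
Reduced mod 2, the three primitive vertices are nonzero vectors of `𝔽₂²` summing to zero,
so `v₀, v₁` are independent mod 2 and `d = det (v₀, v₁)` is odd. By Cramer's rule
`d • ℤ²` lies in the span of the vertices, so the index divides `d²`, which is odd.
-/

open Submodule

lemma IsPrimitive.not_two_dvd_both {v : Z2} (hv : IsPrimitive v) : ¬ (2 ∣ v.1 ∧ 2 ∣ v.2) := by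
  rintro ⟨h₁, h₂⟩
  have h := Int.dvd_gcd h₁ h₂
  rw [show Int.gcd v.1 v.2 = 1 from hv] at h
  norm_num at h

lemma det_ne_zero_zmod_two {p q : ZMod 2 × ZMod 2} (hp : p ≠ 0) (hq : q ≠ 0)
    (hpq : p + q ≠ 0) : p.1 * q.2 - p.2 * q.1 ≠ 0 := by
  revert p q
  decide

lemma odd_det_of_not_two_dvd {v w : Z2} (hv : ¬ (2 ∣ v.1 ∧ 2 ∣ v.2))
    (hw : ¬ (2 ∣ w.1 ∧ 2 ∣ w.2)) (hvw : ¬ (2 ∣ v.1 + w.1 ∧ 2 ∣ v.2 + w.2)) :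
    Odd (v.1 * w.2 - v.2 * w.1) := by
  have reduce : ∀ a b : ℤ, ¬ (2 ∣ a ∧ 2 ∣ b) → ((a : ZMod 2), (b : ZMod 2)) ≠ 0 := by
    simp [Prod.ext_iff, ZMod.intCast_eq_zero_iff_even, even_iff_two_dvd]
  have h := det_ne_zero_zmod_two (reduce _ _ hv) (reduce _ _ hw)
    (by simpa using reduce _ _ hvw)
  rw [← Int.not_even_iff_odd, ← ZMod.intCast_eq_zero_iff_even]
  push_cast
  exact h

lemma det_smul_mem_span_pair (v w x : Z2) :
    (v.1 * w.2 - v.2 * w.1) • x ∈ span ℤ {v, w} := by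
  have cramer : (v.1 * w.2 - v.2 * w.1) • x =
      (w.2 * x.1 - w.1 * x.2) • v + (v.1 * x.2 - v.2 * x.1) • w := by
    ext <;> simp only [Prod.smul_fst, Prod.smul_snd, Prod.fst_add, Prod.snd_add, smul_eq_mul]
      <;> ring
  rw [cramer]
  exact add_mem (smul_mem _ _ (subset_span (by simp))) (smul_mem _ _ (subset_span (by simp)))

lemma AddSubgroup.index_dvd_sq_of_smul_mem {H : AddSubgroup Z2} (d : ℤ)
    (h : ∀ x : Z2, d • x ∈ H) : H.index ∣ d.natAbs ^ 2 := by
  have hle : (AddSubgroup.zmultiples d).prod (AddSubgroup.zmultiples d) ≤ H := by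
    rintro ⟨x, y⟩ ⟨⟨m, rfl⟩, ⟨n, rfl⟩⟩
    simpa [Prod.ext_iff, mul_comm] using add_mem (zsmul_mem (h (1, 0)) m) (zsmul_mem (h (0, 1)) n)
  simpa [sq, Int.index_zmultiples] using AddSubgroup.index_dvd_of_le hle

theorem stmt_4_general (v₀ v₁ v₂ : Z2)
    (hF : IsFanoPolygon {v₀, v₁, v₂}) (hKE : v₀ + v₁ + v₂ = 0) (k : ℕ)
    (hk : (Submodule.span ℤ ({v₀, v₁, v₂} : Set Z2)).toAddSubgroup.index = k) :
    Odd k := by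
  obtain ⟨-, hprim, -⟩ := hF
  have hv₂ : v₂ = -(v₀ + v₁) := eq_neg_of_add_eq_zero_right hKE
  have hd : Odd (v₀.1 * v₁.2 - v₀.2 * v₁.1) :=
    odd_det_of_not_two_dvd (hprim v₀ (by simp)).not_two_dvd_both
      (hprim v₁ (by simp)).not_two_dvd_both
      (by simpa only [hv₂, Prod.fst_neg, Prod.snd_neg, Prod.fst_add, Prod.snd_add, dvd_neg]
        using (hprim v₂ (by simp)).not_two_dvd_both)
  have hdvd : k ∣ (v₀.1 * v₁.2 - v₀.2 * v₁.1).natAbs ^ 2 :=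
    hk ▸ AddSubgroup.index_dvd_sq_of_smul_mem _ fun x =>
      span_mono (by simp [Set.insert_subset_insert]) (det_smul_mem_span_pair v₀ v₁ x)
  exact (Int.natAbs_odd.mpr hd).pow.of_dvd_nat hdvd

/-- The index of a Kähler–Einstein Fano triangle, i.e. the index in `ℤ²` of the sublattice
generated by its vertices, is odd. -/
theorem stmt_4 (v₀ v₁ v₂ : Z2) (hcard : ({v₀, v₁, v₂} : Finset Z2).card = 3)
    (hF : IsFanoPolygon {v₀, v₁, v₂}) (hKE : v₀ + v₁ + v₂ = 0) (k : ℕ)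
    (hk : (Submodule.span ℤ ({v₀, v₁, v₂} : Set Z2)).toAddSubgroup.index = k) :
    Odd k :=
  stmt_4_general v₀ v₁ v₂ hF hKE k hk
end

section
/- Every Kähler–Einstein Fano triangle P ⊂ ℚ² is minimal: for each edge E of P with primitive inner normal u and height h = -min_{x ∈ P} u(x), one has max_{x ∈ P} u(x) ≥ h. -/
/-!
Along an edge with inner normal `u` and height `h`, the linear form `u` attains its minimum `-h`
over the triangle. A face `{u = -h}` of the convex hull of a set is the convex hull of the points of
the set lying on it, so an edge, having two distinct points, contains two distinct vertices. Since
`v₀ + v₁ + v₂ = 0`, the values of `u` at the vertices sum to `0`, so the third vertex has `u = 2h`.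
-/

theorem Set.Subsingleton.convexHull {𝕜 E : Type*} [Semiring 𝕜] [PartialOrder 𝕜]
    [AddCommMonoid E] [Module 𝕜 E] {t : Set E} (ht : t.Subsingleton) :
    (convexHull 𝕜 t).Subsingleton := by
  obtain rfl | ⟨p, rfl⟩ := ht.eq_empty_or_singleton <;> simp

section ConvexFace

variable {𝕜 E : Type*} [CommRing 𝕜] [LinearOrder 𝕜] [IsStrictOrderedRing 𝕜]
  [AddCommGroup E] [Module 𝕜 E]

theorem mem_convexHull_sep_eq_of_forall_le {s : Set E} {f : E →ₗ[𝕜] 𝕜} {c : 𝕜}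
    (hs : ∀ y ∈ s, c ≤ f y) {x : E} (hx : x ∈ convexHull 𝕜 s) (hfx : f x = c) :
    x ∈ convexHull 𝕜 {y ∈ s | f y = c} := by
  set L := {y ∈ s | f y = c}
  have hL : ∀ z ∈ convexHull 𝕜 L, f z = c := fun z hz =>
    convexHull_min (fun y hy => hy.2) (convex_hyperplane f.isLinear c) hz
  -- `{c < f} ∪ convexHull L` is convex and contains `s`, hence contains `convexHull s`.
  set T := {z | c < f z} ∪ convexHull 𝕜 L
  have hT : ∀ z ∈ T, c ≤ f z := by
    rintro z (hz | hz)
    exacts [hz.le, (hL z hz).ge]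
  have hTconv : Convex 𝕜 T := by
    refine convex_iff_forall_pos.2 fun y hy z hz a b ha hb hab => ?_
    by_cases hyz : y ∈ convexHull 𝕜 L ∧ z ∈ convexHull 𝕜 L
    · exact Or.inr (convex_convexHull 𝕜 L hyz.1 hyz.2 ha.le hb.le hab)
    · have hstrict : c < f y ∨ c < f z := by
        rcases hy with hy | hy <;> rcases hz with hz | hz <;> tauto
      left
      show c < f (a • y + b • z)
      rw [map_add, map_smul, map_smul, smul_eq_mul, smul_eq_mul]
      have hc : a * c + b * c = c := by rw [← add_mul, hab, one_mul]
      rcases hstrict with h | h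
      · linarith [mul_lt_mul_of_pos_left h ha, mul_le_mul_of_nonneg_left (hT z hz) hb.le]
      · linarith [mul_le_mul_of_nonneg_left (hT y hy) ha.le, mul_lt_mul_of_pos_left h hb]
  have hsT : s ⊆ T := fun y hy =>
    (hs y hy).lt_or_eq.imp id fun h => subset_convexHull 𝕜 L ⟨hy, h.symm⟩
  rcases convexHull_min hsT hTconv hx with h | h
  · exact absurd hfx h.ne'
  · exact h

theorem nontrivial_sep_eq_of_forall_le {s : Set E} {f : E →ₗ[𝕜] 𝕜} {c : 𝕜}
    (hs : ∀ y ∈ s, c ≤ f y) {x y : E} (hx : x ∈ convexHull 𝕜 s) (hy : y ∈ convexHull 𝕜 s)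
    (hfx : f x = c) (hfy : f y = c) (hxy : x ≠ y) :
    {z ∈ s | f z = c}.Nontrivial := by
  rw [← Set.not_subsingleton_iff]
  exact fun h => hxy <| h.convexHull (mem_convexHull_sep_eq_of_forall_le hs hx hfx)
    (mem_convexHull_sep_eq_of_forall_le hs hy hfy)

end ConvexFace

def dotQLinear (u : Z2) : Q2 →ₗ[ℚ] ℚ where
  toFun := dotQ u
  map_add' x y := by simp only [dotQ, Prod.fst_add, Prod.snd_add]; ring
  map_smul' r x := by
    simp only [dotQ, Prod.smul_fst, Prod.smul_snd, smul_eq_mul, RingHom.id_apply]; ring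

@[simp] theorem dotQLinear_apply (u : Z2) (x : Q2) : dotQLinear u x = dotQ u x := rfl

theorem dotQ_toQ_add (u v w : Z2) : dotQ u (toQ (v + w)) = dotQ u (toQ v) + dotQ u (toQ w) := by
  simp only [dotQ, toQ, Prod.fst_add, Prod.snd_add, Int.cast_add]; ring

theorem dotQ_toQ_zero (u : Z2) : dotQ u (toQ 0) = 0 := by
  simp [dotQ, toQ]

theorem toQ_mem_hull {V : Finset Z2} {v : Z2} (hv : v ∈ V) : toQ v ∈ hull V :=
  subset_convexHull ℚ _ ⟨v, hv, rfl⟩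

theorem stmt_5_general (v₀ v₁ v₂ : Z2) (hKE : v₀ + v₁ + v₂ = 0) :
    ∀ E u h, IsEdge (hull {v₀, v₁, v₂}) E u h →
      ∃ x ∈ hull {v₀, v₁, v₂}, (h : ℚ) ≤ dotQ u x := by
  rintro E u h ⟨-, hpos, hmin, rfl, a, b, ⟨ha, hfa⟩, ⟨hb, hfb⟩, hab⟩
  obtain ⟨-, ⟨⟨p, hp, rfl⟩, hfp⟩, -, ⟨⟨q, hq, rfl⟩, hfq⟩, hpq⟩ :=
    nontrivial_sep_eq_of_forall_le (f := dotQLinear u)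
      (fun y hy => hmin y (subset_convexHull ℚ _ hy)) ha hb hfa hfb hab
  have hsum : dotQ u (toQ v₀) + dotQ u (toQ v₁) + dotQ u (toQ v₂) = 0 := by
    rw [← dotQ_toQ_add, ← dotQ_toQ_add, hKE, dotQ_toQ_zero]
  have hpos : (0 : ℚ) < h := by exact_mod_cast hpos
  by_contra! hlt
  have h₀ := hlt _ (toQ_mem_hull (v := v₀) (by simp))
  have h₁ := hlt _ (toQ_mem_hull (v := v₁) (by simp))
  have h₂ := hlt _ (toQ_mem_hull (v := v₂) (by simp))
  simp only [Finset.coe_insert, Finset.coe_singleton, Set.mem_insert_iff,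
    Set.mem_singleton_iff, dotQLinear_apply] at hp hq hfp hfq
  rcases hp with rfl | rfl | rfl <;> rcases hq with rfl | rfl | rfl <;>
    first | exact hpq rfl | linarith

/-- Every Kähler–Einstein Fano triangle is minimal: for each edge with primitive inner
normal `u` and height `h`, some point of `P` satisfies `u(x) ≥ h`. -/
theorem stmt_5 (v₀ v₁ v₂ : Z2) (hcard : ({v₀, v₁, v₂} : Finset Z2).card = 3)
    (hF : IsFanoPolygon {v₀, v₁, v₂}) (hKE : v₀ + v₁ + v₂ = 0) :
    ∀ E u h, IsEdge (hull {v₀, v₁, v₂}) E u h →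
      ∃ x ∈ hull {v₀, v₁, v₂}, (h : ℚ) ≤ dotQ u x :=
  stmt_5_general v₀ v₁ v₂ hKE
end

section
/- Let P ⊂ ℚ² be a symmetric Fano polygon, i.e. the subgroup Aut(P) ≤ GL₂(ℤ) of lattice automorphisms preserving P fixes only the origin. Then P is either centrally symmetric (P = -P) or 3-symmetric (Aut(P) contains an element of order 3). -/
/-!
Every automorphism of `P` permutes its vertices, which span `ℚ²`, so it has finite order. By
Cayley–Hamilton, the powers of an integer `2 × 2` matrix are `Gᵏ = Uₖ G - (det G) Uₖ₋₁` for the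
Lucas sequence `U(tr G, det G)`, and `Uₖ > 0` for `k > 0` once `tr G ≥ 2` (or `tr G ≥ 1` when
`det G = -1`); then `Gⁿ = 1` makes `G` scalar. Applying this to `±G` bounds the trace, so a
finite-order `G` of determinant `±1` is `±1`, has order `3`, is a reflection, or has `-1` among its
powers. If `P` is neither centrally symmetric nor `3`-symmetric, every automorphism is thus `1` or
a reflection. The product of two reflections has determinant `1`, so there is at most one
reflection `r`, and a nonzero vector fixed by `r` is fixed by all of `Aut(P)`.
-/

abbrev M2 := Matrix (Fin 2) (Fin 2) ℤ

lemma Matrix.sq_eq_trace_smul_sub_det_smul {R : Type*} [CommRing R]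
    (M : Matrix (Fin 2) (Fin 2) R) : M ^ 2 = M.trace • M - M.det • 1 := by
  ext i j
  fin_cases i <;> fin_cases j <;>
    simp [sq, Matrix.mul_apply, Fin.sum_univ_two, Matrix.trace_fin_two, Matrix.det_fin_two] <;> ring

def lucasU (t d : ℤ) : ℕ → ℤ
  | 0 => 0
  | 1 => 1
  | k + 2 => t * lucasU t d (k + 1) - d * lucasU t d k

lemma lucasU_add_two (t d : ℤ) (k : ℕ) :
    lucasU t d (k + 2) = t * lucasU t d (k + 1) - d * lucasU t d k := rfl

lemma pow_succ_eq_lucasU (G : M2) (k : ℕ) :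
    G ^ (k + 1) = lucasU G.trace G.det (k + 1) • G - (G.det * lucasU G.trace G.det k) • 1 := by
  induction k with
  | zero => simp [lucasU]
  | succ k ih =>
    rw [pow_succ, ih, sub_mul, smul_mul_assoc, smul_mul_assoc, one_mul, ← sq,
      G.sq_eq_trace_smul_sub_det_smul, lucasU_add_two]
    module

lemma one_le_lucasU_succ {t d : ℤ} (h : (2 ≤ t ∧ d = 1) ∨ (1 ≤ t ∧ d = -1)) (k : ℕ) :
    1 ≤ lucasU t d (k + 1) := by
  have key : ∀ k, 1 ≤ lucasU t d (k + 1) ∧ lucasU t d (k + 1) ≤ lucasU t d (k + 2) := by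
    intro k
    induction k with
    | zero => simp only [lucasU]; omega
    | succ k ih =>
      refine ⟨ih.1.trans ih.2, ?_⟩
      rw [lucasU_add_two t d (k + 1)]
      rcases h with ⟨ht, rfl⟩ | ⟨ht, rfl⟩ <;> nlinarith
  exact (key k).1

lemma eq_one_of_pow_eq_one_of_trace {G : M2}
    (ht : (2 ≤ G.trace ∧ G.det = 1) ∨ (1 ≤ G.trace ∧ G.det = -1)) {n : ℕ} (hn : 0 < n)
    (hGn : G ^ n = 1) : G = 1 := by
  obtain ⟨m, rfl⟩ := Nat.exists_eq_add_of_lt hn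
  rw [zero_add, pow_succ_eq_lucasU] at hGn
  have ha := one_le_lucasU_succ ht m
  set a := lucasU G.trace G.det (m + 1)
  set c := G.det * lucasU G.trace G.det m
  have e (i j : Fin 2) : a * G i j - c * (1 : M2) i j = (1 : M2) i j := by
    simpa only [Matrix.sub_apply, Matrix.smul_apply, smul_eq_mul] using congrFun₂ hGn i j
  have h01 : a * G 0 1 = 0 := by simpa using e 0 1
  have h10 : a * G 1 0 = 0 := by simpa using e 1 0
  have h00 : a * G 0 0 - c = 1 := by simpa using e 0 0
  have h11 : a * G 1 1 - c = 1 := by simpa using e 1 1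
  have hG01 : G 0 1 = 0 := by nlinarith
  have hG10 : G 1 0 = 0 := by nlinarith
  have hdiag : G 1 1 = G 0 0 := by nlinarith
  have hdet : G.det = G 0 0 ^ 2 := by rw [Matrix.det_fin_two, hG01, hdiag]; ring
  have htr : G.trace = 2 * G 0 0 := by rw [Matrix.trace_fin_two, hdiag]; ring
  have h1 : G 0 0 = 1 := by rcases ht with ⟨ht, hd⟩ | ⟨ht, hd⟩ <;> nlinarith
  ext i j
  fin_cases i <;> fin_cases j <;> simp [hG01, hG10, hdiag, h1]

lemma eq_one_or_order_three_or_reflection_or_pow_eq_neg_one {G : M2} (hG : IsOfFinOrder G)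
    (hdet : IsUnit G.det) :
    G = 1 ∨ (G ^ 3 = 1 ∧ G ≠ 1) ∨ (G ^ 2 = 1 ∧ G.det = -1) ∨ ∃ k : ℕ, G ^ k = -1 := by
  obtain ⟨n, hn, hGn⟩ := hG.exists_pow_eq_one
  have hGn' : (-G) ^ (2 * n) = 1 := by
    rw [pow_mul, neg_sq, ← pow_mul, mul_comm, pow_mul, hGn, one_pow]
  have hunit : G.det = 1 ∨ G.det = -1 := Int.isUnit_iff.mp hdet
  have hdet_neg : (-G).det = G.det := by simp [Matrix.det_neg]
  by_cases hbig : (2 ≤ G.trace ∧ G.det = 1) ∨ (1 ≤ G.trace ∧ G.det = -1)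
  · exact Or.inl (eq_one_of_pow_eq_one_of_trace hbig hn hGn)
  by_cases hsmall : (G.trace ≤ -2 ∧ G.det = 1) ∨ (G.trace ≤ -1 ∧ G.det = -1)
  · have : -G = 1 := eq_one_of_pow_eq_one_of_trace (by rw [Matrix.trace_neg, hdet_neg]; omega)
      (by omega) hGn'
    exact Or.inr (Or.inr (Or.inr ⟨1, by rw [pow_one, ← this, neg_neg]⟩))
  have hsq := G.sq_eq_trace_smul_sub_det_smul
  obtain ⟨ht, hd⟩ | ⟨ht, hd⟩ | ⟨ht, hd⟩ | ⟨ht, hd⟩ :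
      (G.trace = -1 ∧ G.det = 1) ∨ (G.trace = 0 ∧ G.det = 1) ∨ (G.trace = 1 ∧ G.det = 1) ∨
        (G.trace = 0 ∧ G.det = -1) := by omega
  · refine Or.inr (Or.inl ⟨?_, fun h => by simp [h] at ht⟩)
    rw [ht, hd] at hsq
    rw [pow_succ, hsq, sub_mul, smul_mul_assoc, smul_mul_assoc, one_mul, ← sq, hsq]
    module
  · exact Or.inr (Or.inr (Or.inr ⟨2, by rw [hsq, ht, hd]; module⟩))
  · refine Or.inr (Or.inr (Or.inr ⟨3, ?_⟩))
    rw [ht, hd] at hsq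
    rw [pow_succ, hsq, sub_mul, smul_mul_assoc, smul_mul_assoc, one_mul, ← sq, hsq]
    module
  · exact Or.inr (Or.inr (Or.inl ⟨by rw [hsq, ht, hd]; module, hd⟩))

theorem Submodule.span_eq_top_of_nonempty_interior_convexHull {𝕜 E : Type*} [Ring 𝕜]
    [PartialOrder 𝕜] [IsOrderedRing 𝕜] [TopologicalSpace 𝕜]
    [Filter.NeBot (nhdsWithin (0 : 𝕜) {x | IsUnit x})] [AddCommGroup E] [Module 𝕜 E]
    [TopologicalSpace E] [ContinuousAdd E] [ContinuousSMul 𝕜 E] {s : Set E}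
    (hs : (interior (convexHull 𝕜 s)).Nonempty) : Submodule.span 𝕜 s = ⊤ :=
  Submodule.eq_top_of_nonempty_interior' _
    (hs.mono (interior_mono (convexHull_min Submodule.subset_span (Submodule.convex _))))

def applyEnd : M2 →* Module.End ℚ Q2 where
  toFun G :=
    { toFun := applyM G
      map_add' := fun x y => by
        simp only [applyM, Prod.fst_add, Prod.snd_add, Prod.mk_add_mk, Prod.mk.injEq]
        constructor <;> ring
      map_smul' := fun c x => by
        simp only [applyM, Prod.smul_fst, Prod.smul_snd, smul_eq_mul, RingHom.id_apply,
          Prod.smul_mk, Prod.mk.injEq]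
        constructor <;> ring }
  map_one' := LinearMap.ext fun x => by simp [applyM]
  map_mul' G H := LinearMap.ext fun x => by
    simp only [applyM, Matrix.mul_apply, Fin.sum_univ_two, LinearMap.coe_mk, AddHom.coe_mk,
      Module.End.mul_apply, Prod.mk.injEq]
    push_cast
    constructor <;> ring

@[simp]
lemma coe_applyEnd (G : M2) : ⇑(applyEnd G) = applyM G := rfl

lemma applyEnd_injective : Function.Injective applyEnd := by
  intro G H h
  have e₁ := LinearMap.congr_fun h (1, 0)
  have e₂ := LinearMap.congr_fun h (0, 1)
  simp only [coe_applyEnd, applyM, Prod.mk.injEq, mul_one, mul_zero, add_zero, zero_add,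
    Int.cast_inj] at e₁ e₂
  ext i j
  fin_cases i <;> fin_cases j
  exacts [e₁.1, e₂.1, e₁.2, e₂.2]

lemma applyM_neg_one (x : Q2) : applyM (-1) x = -x := by
  simp [applyM, Prod.ext_iff]

lemma IsAut.one (P : Set Q2) : IsAut 1 P :=
  ⟨by simp, by rw [← coe_applyEnd, map_one, Module.End.coe_one, Set.image_id]⟩

lemma IsAut.mul {G H : M2} {P : Set Q2} (hG : IsAut G P) (hH : IsAut H P) :
    IsAut (G * H) P := by
  refine ⟨by rw [Matrix.det_mul]; exact hG.1.mul hH.1, ?_⟩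
  rw [← coe_applyEnd, map_mul, Module.End.coe_mul, Set.image_comp, coe_applyEnd, coe_applyEnd,
    hH.2, hG.2]

def autSubmonoid (P : Set Q2) : Submonoid M2 where
  carrier := {G | IsAut G P}
  one_mem' := IsAut.one P
  mul_mem' := IsAut.mul

lemma IsAut.pow {G : M2} {P : Set Q2} (hG : IsAut G P) (k : ℕ) : IsAut (G ^ k) P :=
  (autSubmonoid P).pow_mem hG k

lemma IsAut.image_extremePoints {G : M2} {P : Set Q2} (hG : IsAut G P) :
    applyM G '' Set.extremePoints ℚ P = Set.extremePoints ℚ P := by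
  have hbij : Function.Bijective (applyEnd G) :=
    (Module.End.isUnit_iff _).mp (((Matrix.isUnit_iff_isUnit_det G).mpr hG.1).map applyEnd)
  have := _root_.image_extremePoints (LinearEquiv.ofBijective (applyEnd G) hbij) P
  rwa [show ⇑(LinearEquiv.ofBijective (applyEnd G) hbij) = applyM G from rfl, hG.2] at this

lemma IsAut.isOfFinOrder {V : Finset Z2} (hF : IsFanoPolygon V) {G : M2}
    (hG : IsAut G (hull V)) : IsOfFinOrder G := by
  obtain ⟨hint, -, hext⟩ := hF
  have : Finite (Set.extremePoints ℚ (hull V)) := hext ▸ V.finite_toSet.image toQ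
  have hspan : Submodule.span ℚ (Set.extremePoints ℚ (hull V)) = ⊤ := by
    rw [← hext]
    exact Submodule.span_eq_top_of_nonempty_interior_convexHull ⟨0, hint⟩
  have hmaps (k : ℕ) : Set.MapsTo (applyM (G ^ k)) (Set.extremePoints ℚ (hull V))
      (Set.extremePoints ℚ (hull V)) :=
    Set.mapsTo_iff_image_subset.mpr (hG.pow k).image_extremePoints.subset
  obtain ⟨u, rfl⟩ := (Matrix.isUnit_iff_isUnit_det G).mpr hG.1
  rw [Units.isOfFinOrder_val, ← injective_pow_iff_not_isOfFinOrder.not_left]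
  refine fun hinj => not_injective_infinite_finite (fun k => (hmaps k).restrict) fun i j hij => ?_
  refine hinj (Units.ext (applyEnd_injective (LinearMap.ext_on hspan fun x hx => ?_)))
  simp only [Units.val_pow_eq_pow_val]
  exact congrArg Subtype.val (congrFun hij ⟨x, hx⟩)

lemma centSym_of_isAut_neg_one {P : Set Q2} (h : IsAut (-1) P) : CentSym P := by
  have hneg : -P = P := by
    simpa only [show applyM (-1) = Neg.neg from funext applyM_neg_one, Set.image_neg_eq_neg]
      using h.2
  intro x
  rw [← Set.mem_neg, hneg]

lemma exists_ne_zero_applyM_eq_self {G : M2} (hG : G ^ 2 = 1) (hG' : G ≠ -1) :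
    ∃ x ≠ 0, applyM G x = x := by
  obtain ⟨y, hy⟩ : ∃ y, applyM G y ≠ -y := by
    by_contra! h
    exact hG' (applyEnd_injective (LinearMap.ext fun y => by simp [h, applyM_neg_one]))
  refine ⟨applyM G y + y, fun h => hy (eq_neg_of_add_eq_zero_left h), ?_⟩
  rw [← coe_applyEnd, map_add, ← Module.End.mul_apply, ← map_mul, ← sq, hG, map_one,
    Module.End.one_apply, add_comm]

lemma exists_common_fixed_of_forall_eq_one_or_reflection {P : Set Q2}
    (h : ∀ G, IsAut G P → G = 1 ∨ (G ^ 2 = 1 ∧ G.det = -1)) :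
    ∃ x ≠ 0, ∀ G, IsAut G P → applyM G x = x := by
  by_cases hr : ∃ r, IsAut r P ∧ r ≠ 1
  · obtain ⟨r, hr, hr1⟩ := hr
    obtain ⟨hr2, hrd⟩ := (h r hr).resolve_left hr1
    obtain ⟨x, hx0, hx⟩ :=
      exists_ne_zero_applyM_eq_self hr2 fun h => by norm_num [h, Matrix.det_neg] at hrd
    refine ⟨x, hx0, fun G hG => ?_⟩
    obtain rfl | ⟨-, hGd⟩ := h G hG
    · simp [applyM]
    obtain hrG | ⟨-, hrGd⟩ := h (r * G) (hr.mul hG)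
    · rwa [← one_mul G, ← hr2, sq, mul_assoc, hrG, mul_one]
    · rw [Matrix.det_mul, hrd, hGd] at hrGd
      norm_num at hrGd
  · push Not at hr
    exact ⟨(1, 0), by simp, fun G hG => by simp [hr G hG, applyM]⟩

/-- A symmetric Fano polygon is centrally symmetric or 3-symmetric. -/
theorem stmt_6 (V : Finset Z2) (hF : IsFanoPolygon V)
    (hS : SymmetricPolygon (hull V)) :
    CentSym (hull V) ∨ ThreeSym (hull V) := by
  by_contra! ⟨hC, h3⟩
  have hrefl (G : M2) (hG : IsAut G (hull V)) : G = 1 ∨ (G ^ 2 = 1 ∧ G.det = -1) := by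
    obtain h | h | h | ⟨k, hk⟩ :=
      eq_one_or_order_three_or_reflection_or_pow_eq_neg_one (hG.isOfFinOrder hF) hG.1
    · exact Or.inl h
    · exact absurd ⟨G, hG, h⟩ h3
    · exact Or.inr h
    · exact absurd (centSym_of_isAut_neg_one (hk ▸ hG.pow k)) hC
  obtain ⟨x, hx0, hx⟩ := exists_common_fixed_of_forall_eq_one_or_reflection hrefl
  exact hx0 (hS.subset hx)
end

section
/- Let P ⊂ ℚ² be a centrally symmetric Fano polygon with non-empty basket of R-singularities and two pairs of opposite long edges ±E₁, ±E₂ with primitive inner normals u₁, u₂ ∈ Hom(ℤ²,ℤ). Then det(u₁, u₂) = ±1, i.e. u₁ and u₂ form a basis of the dual lattice. -/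
/-!
Central symmetry puts `P` in the strips `|u₁| ≤ h₁` and `|u₂| ≤ h₂`. Along the edge `E₁` the
functional `u₂` changes by `|det(u₁, u₂)|` per lattice step, so
`latticeLength E₁ * |det(u₁, u₂)| ≤ 2 h₂`, and symmetrically for `E₂`; as long edges have
`h_i ≤ latticeLength E_i`, this forces `|det(u₁, u₂)| ≤ 2`. If it were `2`, every inequality
would be an equality: `P` would contain the four corners of the parallelogram
`|u₁| ≤ h, |u₂| ≤ h` that contains it, so its only edges would be `±E₁, ±E₂`, each of lattice
length equal to its height, and the basket of R-singularities would be empty.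
-/

open scoped Pointwise

def dotZ (u v : Z2) : ℤ := u.1 * v.1 + u.2 * v.2

def det₂ (u w : Z2) : ℤ := u.1 * w.2 - u.2 * w.1

lemma dotQ_toQ_s8 (u v : Z2) : dotQ u (toQ v) = dotZ u v := by
  simp [dotQ, toQ, dotZ]

lemma dotQ_neg (u : Z2) (x : Q2) : dotQ u (-x) = -dotQ u x := by
  simp only [dotQ, Prod.fst_neg, Prod.snd_neg]; ring

lemma dotQ_neg_left (u : Z2) (x : Q2) : dotQ (-u) x = -dotQ u x := by
  simp only [dotQ, Prod.fst_neg, Prod.snd_neg, Int.cast_neg]; ring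

lemma toQ_neg (v : Z2) : toQ (-v) = -toQ v := by
  simp [toQ]

lemma det₂_swap (u w : Z2) : det₂ w u = -det₂ u w := by
  simp only [det₂]; ring

lemma IsPrimitive.neg {u : Z2} (hu : IsPrimitive u) : IsPrimitive (-u) := by
  simpa [IsPrimitive] using hu

lemma IsPrimitive.eq_or_eq_neg_of_det₂_eq_zero {u w : Z2} (hu : IsPrimitive u)
    (hw : IsPrimitive w) (h : det₂ u w = 0) : w = u ∨ w = -u := by
  obtain ⟨x, y, hxy⟩ := Int.isCoprime_iff_gcd_eq_one.mpr hu
  simp only [det₂] at h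
  set k := x * w.1 + y * w.2
  have h1 : w.1 = k * u.1 := by linear_combination (-w.1) * hxy - y * h
  have h2 : w.2 = k * u.2 := by linear_combination (-w.2) * hxy + x * h
  have hk : Int.natAbs k = 1 := by
    have hg : Int.gcd (k * u.1) (k * u.2) = 1 := by rw [← h1, ← h2]; exact hw
    rwa [Int.gcd_mul_left, hu, mul_one] at hg
  rcases Int.natAbs_eq_iff.mp hk with hk | hk
  · left; simp [Prod.ext_iff, h1, h2, hk]
  · right; simp [Prod.ext_iff, h1, h2, hk]

lemma det₂_mul_dotQ (u₁ u₂ u : Z2) (x : Q2) :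
    (det₂ u₁ u₂ : ℚ) * dotQ u x = det₂ u u₂ * dotQ u₁ x + det₂ u₁ u * dotQ u₂ x := by
  simp only [det₂, dotQ]; push_cast; ring

lemma eq_of_dotQ_eq {u₁ u₂ : Z2} (hd : det₂ u₁ u₂ ≠ 0) {x y : Q2}
    (h₁ : dotQ u₁ x = dotQ u₁ y) (h₂ : dotQ u₂ x = dotQ u₂ y) : x = y := by
  have hdQ : (det₂ u₁ u₂ : ℚ) ≠ 0 := by exact_mod_cast hd
  simp only [dotQ] at h₁ h₂
  simp only [det₂] at hdQ
  push_cast at hdQ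
  ext
  · refine mul_left_cancel₀ hdQ ?_
    linear_combination (u₂.2 : ℚ) * h₁ - (u₁.2 : ℚ) * h₂
  · refine mul_left_cancel₀ hdQ ?_
    linear_combination (u₁.1 : ℚ) * h₂ - (u₂.1 : ℚ) * h₁

lemma Finset.exists_card_sub_one_le_sub (K : Finset ℤ) (hK : K.Nonempty) :
    ∃ m ∈ K, ∃ M ∈ K, (K.card : ℤ) - 1 ≤ M - m := by
  refine ⟨K.min' hK, K.min'_mem hK, K.max' hK, K.max'_mem hK, ?_⟩
  have hsub : K ⊆ Finset.Icc (K.min' hK) (K.max' hK) := fun t ht =>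
    Finset.mem_Icc.mpr ⟨K.min'_le t ht, K.le_max' t ht⟩
  have hcard := Finset.card_le_card hsub
  rw [Int.card_Icc] at hcard
  have := hK.card_pos
  omega

lemma eq_add_smul_of_dotZ_eq {u v v₀ : Z2} {x y : ℤ} (hxy : x * u.1 + y * u.2 = 1)
    (h : dotZ u v = dotZ u v₀) :
    v = v₀ + (x * (v.2 - v₀.2) - y * (v.1 - v₀.1)) • (-u.2, u.1) := by
  simp only [dotZ] at h
  ext
  · simp only [Prod.fst_add, Prod.smul_fst, smul_eq_mul]
    linear_combination -(v.1 - v₀.1) * hxy + x * h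
  · simp only [Prod.snd_add, Prod.smul_snd, smul_eq_mul]
    linear_combination -(v.2 - v₀.2) * hxy + y * h

lemma dotZ_add_smul (u w v₀ : Z2) (k : ℤ) :
    dotZ w (v₀ + k • (-u.2, u.1)) = dotZ w v₀ + k * det₂ u w := by
  simp only [dotZ, det₂, Prod.fst_add, Prod.snd_add, Prod.smul_fst, Prod.smul_snd,
    smul_eq_mul]
  ring

/-- Consecutive lattice points on the line differ by the primitive vector `(-u.2, u.1)`, on which
`w` takes the value `det₂ u w`. -/
lemma exists_card_mul_abs_det₂_le {u : Z2} (hu : IsPrimitive u) (S : Finset Z2)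
    (hS : S.Nonempty) {c : ℤ} (hSc : ∀ v ∈ S, dotZ u v = c) (w : Z2) :
    ∃ a ∈ S, ∃ b ∈ S, ((S.card : ℤ) - 1) * |det₂ u w| ≤ |dotZ w b - dotZ w a| := by
  obtain ⟨x, y, hxy⟩ := Int.isCoprime_iff_gcd_eq_one.mpr hu
  obtain ⟨v₀, hv₀⟩ := hS
  set κ : Z2 → ℤ := fun v => x * (v.2 - v₀.2) - y * (v.1 - v₀.1)
  have hκ : ∀ v ∈ S, v = v₀ + κ v • (-u.2, u.1) := fun v hv =>
    eq_add_smul_of_dotZ_eq hxy ((hSc v hv).trans (hSc v₀ hv₀).symm)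
  have hinj : Set.InjOn κ S := fun v hv v' hv' h => by
    rw [hκ v hv, hκ v' hv', h]
  obtain ⟨m, hm, M, hM, hmM⟩ :=
    (S.image κ).exists_card_sub_one_le_sub ⟨κ v₀, Finset.mem_image_of_mem κ hv₀⟩
  rw [Finset.card_image_of_injOn hinj] at hmM
  obtain ⟨a, ha, rfl⟩ := Finset.mem_image.mp hm
  obtain ⟨b, hb, rfl⟩ := Finset.mem_image.mp hM
  refine ⟨a, ha, b, hb, ?_⟩
  have := Finset.card_pos.mpr ⟨a, ha⟩
  rw [hκ a ha, hκ b hb, dotZ_add_smul, dotZ_add_smul, add_sub_add_left_eq_sub, ← sub_mul,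
    abs_mul, abs_of_nonneg (by omega : (0 : ℤ) ≤ κ b - κ a)]
  exact mul_le_mul_of_nonneg_right hmM (abs_nonneg _)

lemma latticeLength_neg (E : Set Q2) : latticeLength (-E) = latticeLength E := by
  have : {v : Z2 | toQ v ∈ -E} = -{v : Z2 | toQ v ∈ E} := by
    ext v
    simp [Set.mem_neg, toQ_neg]
  rw [latticeLength, latticeLength, this, Set.ncard_neg]

section Edges

variable {P E E' : Set Q2} {u u' : Z2} {h h' : ℤ}

lemma IsEdge.mem_iff (hE : IsEdge P E u h) {x : Q2} :
    x ∈ E ↔ x ∈ P ∧ dotQ u x = -h := by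
  rw [hE.2.2.2.1]; rfl

/-- The height of an edge is minus the minimum of `u` on `P`, so the normal determines it. -/
lemma IsEdge.unique (hE : IsEdge P E u h) (hE' : IsEdge P E' u h') : h' = h ∧ E' = E := by
  obtain ⟨z, -, hz, -⟩ := hE.2.2.2.2
  obtain ⟨z', -, hz', -⟩ := hE'.2.2.2.2
  rw [hE.mem_iff] at hz
  rw [hE'.mem_iff] at hz'
  have h₁ := hE.2.2.1 z' hz'.1
  have h₂ := hE'.2.2.1 z hz.1
  have hh : h' = h := by exact_mod_cast (by linarith : (h' : ℚ) = h)
  subst hh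
  exact ⟨rfl, hE'.2.2.2.1.trans hE.2.2.2.1.symm⟩

lemma IsEdge.neg (hC : CentSym P) (hE : IsEdge P E u h) : IsEdge P (-E) (-u) h := by
  obtain ⟨hu, hh, hle, -, a, b, ha, hb, hab⟩ := id hE
  refine ⟨hu.neg, hh, fun x hx => ?_, ?_, -a, -b, ?_, ?_, neg_injective.ne hab⟩
  · have := hle (-x) ((hC x).mp hx)
    rw [dotQ_neg] at this
    rw [dotQ_neg_left]; linarith
  · ext x
    rw [Set.mem_neg, hE.mem_iff, ← hC, dotQ_neg, Set.mem_ofPred_eq, dotQ_neg_left, neg_inj]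
  · rwa [Set.mem_neg, neg_neg]
  · rwa [Set.mem_neg, neg_neg]

lemma IsEdge.abs_dotQ_le (hC : CentSym P) (hE : IsEdge P E u h) {x : Q2} (hx : x ∈ P) :
    |dotQ u x| ≤ h := by
  have h₁ := hE.2.2.1 x hx
  have h₂ := hE.2.2.1 (-x) ((hC x).mp hx)
  rw [dotQ_neg] at h₂
  exact abs_le.mpr ⟨h₁, by linarith⟩

lemma IsEdge.height_eq_and_latticeLength_eq_of_eq_or_eq_neg (hC : CentSym P)
    (hE : IsEdge P E u h) (hE' : IsEdge P E' u' h') (hu : u' = u ∨ u' = -u) :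
    h' = h ∧ latticeLength E' = latticeLength E := by
  rcases hu with rfl | rfl
  · obtain ⟨rfl, rfl⟩ := hE.unique hE'
    exact ⟨rfl, rfl⟩
  · obtain ⟨rfl, rfl⟩ := (hE.neg hC).unique hE'
    exact ⟨rfl, latticeLength_neg E⟩

lemma IsEdge.exists_latticeLength_mul_abs_det₂_le (hE : IsEdge P E u h)
    (hL : 0 < latticeLength E) (w : Z2) :
    ∃ A ∈ E, ∃ B ∈ E, (latticeLength E : ℚ) * |(det₂ u w : ℚ)| ≤ |dotQ w B - dotQ w A| := by
  set S := {v : Z2 | toQ v ∈ E}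
  have hS : latticeLength E = S.ncard - 1 := rfl
  have hfin : S.Finite := Set.finite_of_ncard_pos (by omega)
  have hcard : hfin.toFinset.card = latticeLength E + 1 := by
    rw [← Set.ncard_eq_toFinset_card S hfin]; omega
  have hne : hfin.toFinset.Nonempty := by rw [← Finset.card_pos, hcard]; omega
  have hline : ∀ v ∈ hfin.toFinset, dotZ u v = -h := fun v hv => by
    have := ((hE.mem_iff).mp (hfin.mem_toFinset.mp hv)).2
    rw [dotQ_toQ_s8] at this
    exact_mod_cast this
  obtain ⟨a, ha, b, hb, hab⟩ := exists_card_mul_abs_det₂_le hE.1 _ hne hline w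
  refine ⟨toQ a, hfin.mem_toFinset.mp ha, toQ b, hfin.mem_toFinset.mp hb, ?_⟩
  rw [hcard] at hab
  rw [dotQ_toQ_s8, dotQ_toQ_s8]
  exact_mod_cast (by simpa using hab)

lemma IsEdge.abs_dotQ_sub_le (hC : CentSym P) (hE : IsEdge P E u h) {x y : Q2} (hx : x ∈ P)
    (hy : y ∈ P) : |dotQ u y - dotQ u x| ≤ 2 * h := by
  have := abs_sub (dotQ u y) (dotQ u x)
  linarith [hE.abs_dotQ_le hC hx, hE.abs_dotQ_le hC hy]

lemma mul_ite_le_mul (γ : ℚ) {c s : ℚ} (hs : |s| ≤ c) :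
    γ * (if 0 < γ then -c else c) ≤ γ * s := by
  rw [abs_le] at hs
  split_ifs with hpos
  · nlinarith
  · nlinarith [not_lt.mp hpos]

/-- Otherwise `u = α u₁ + β u₂` with `α, β ≠ 0` attains its minimum on the parallelogram only
at one corner, so the edge would be a single point. -/
lemma IsEdge.det₂_eq_zero_or_det₂_eq_zero {u₁ u₂ : Z2} {c : ℚ}
    (hbound : ∀ x ∈ P, |dotQ u₁ x| ≤ c ∧ |dotQ u₂ x| ≤ c)
    (hcorner : ∀ c₁ c₂ : ℚ, |c₁| = c → |c₂| = c → ∃ C ∈ P, dotQ u₁ C = c₁ ∧ dotQ u₂ C = c₂)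
    (hd : det₂ u₁ u₂ ≠ 0) (hE : IsEdge P E u h) : det₂ u u₂ = 0 ∨ det₂ u₁ u = 0 := by
  by_contra! hpq
  have hdQ : (det₂ u₁ u₂ : ℚ) ≠ 0 := by exact_mod_cast hd
  set α : ℚ := det₂ u u₂ / det₂ u₁ u₂
  set β : ℚ := det₂ u₁ u / det₂ u₁ u₂
  have hα : α ≠ 0 := div_ne_zero (by exact_mod_cast hpq.1) hdQ
  have hβ : β ≠ 0 := div_ne_zero (by exact_mod_cast hpq.2) hdQ
  have hdecomp : ∀ x, dotQ u x = α * dotQ u₁ x + β * dotQ u₂ x := fun x => by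
    rw [div_mul_eq_mul_div, div_mul_eq_mul_div, ← add_div, eq_div_iff hdQ]
    linear_combination det₂_mul_dotQ u₁ u₂ u x
  obtain ⟨a, b, ha, hb, hab⟩ := hE.2.2.2.2
  have hc : 0 ≤ c := (abs_nonneg _).trans (hbound a (hE.mem_iff.mp ha).1).1
  have habs : ∀ γ : ℚ, |if 0 < γ then -c else c| = c := fun γ => by
    split_ifs <;> simp [abs_of_nonneg hc]
  obtain ⟨C, hCP, hC₁, hC₂⟩ := hcorner _ _ (habs α) (habs β)
  have hcorner_of_mem : ∀ z ∈ E, dotQ u₁ z = (if 0 < α then -c else c) ∧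
      dotQ u₂ z = (if 0 < β then -c else c) := by
    intro z hz
    obtain ⟨hzP, hzu⟩ := hE.mem_iff.mp hz
    have m₁ := mul_ite_le_mul α (hbound z hzP).1
    have m₂ := mul_ite_le_mul β (hbound z hzP).2
    have hCu := hE.2.2.1 C hCP
    rw [hdecomp, hC₁, hC₂] at hCu
    rw [hdecomp] at hzu
    exact ⟨mul_left_cancel₀ hα (by linarith), mul_left_cancel₀ hβ (by linarith)⟩
  obtain ⟨ha₁, ha₂⟩ := hcorner_of_mem a ha
  obtain ⟨hb₁, hb₂⟩ := hcorner_of_mem b hb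
  exact hab (eq_of_dotQ_eq hd (ha₁.trans hb₁.symm) (ha₂.trans hb₂.symm))

/-- `A` and `B` are corners of the parallelogram `|u₁| ≤ h, |u₂| ≤ h`, which then contains `P`
and all four of its corners, so the edges of `P` are `±E₁` and `±E₂`. -/
lemma CentSym.not_hasRsing_of_parallelogram {E₁ E₂ : Set Q2} {u₁ u₂ : Z2} (hC : CentSym P)
    (hE₁ : IsEdge P E₁ u₁ h) (hE₂ : IsEdge P E₂ u₂ h) (hd : det₂ u₁ u₂ ≠ 0)
    (hL₁ : (latticeLength E₁ : ℤ) = h) (hL₂ : (latticeLength E₂ : ℤ) = h) {A B : Q2}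
    (hA : A ∈ E₁) (hB : B ∈ E₁) (hAB : 2 * (h : ℚ) ≤ |dotQ u₂ B - dotQ u₂ A|) :
    ¬ HasRsing P := by
  rintro ⟨E, u, h', hE, hndvd⟩
  have hh : (0 : ℚ) ≤ h := by exact_mod_cast hE₁.2.1.le
  have hbound : ∀ x ∈ P, |dotQ u₁ x| ≤ h ∧ |dotQ u₂ x| ≤ h := fun x hx =>
    ⟨hE₁.abs_dotQ_le hC hx, hE₂.abs_dotQ_le hC hx⟩
  obtain ⟨hAP, hA₁⟩ := hE₁.mem_iff.mp hA
  obtain ⟨hBP, hB₁⟩ := hE₁.mem_iff.mp hB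
  have hE₁corner : ∀ c₂ : ℚ, |c₂| = h → ∃ C ∈ E₁, dotQ u₂ C = c₂ := by
    intro c₂ hc₂
    have hA₂ := abs_le.mp (hbound A hAP).2
    have hB₂ := abs_le.mp (hbound B hBP).2
    rcases (abs_eq hh).mp hc₂ with rfl | rfl <;> rcases le_abs'.mp hAB with hAB' | hAB'
    exacts [⟨A, hA, by linarith⟩, ⟨B, hB, by linarith⟩, ⟨B, hB, by linarith⟩,
      ⟨A, hA, by linarith⟩]
  have hcorner : ∀ c₁ c₂ : ℚ, |c₁| = h → |c₂| = h →
      ∃ C ∈ P, dotQ u₁ C = c₁ ∧ dotQ u₂ C = c₂ := by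
    intro c₁ c₂ hc₁ hc₂
    rcases (abs_eq hh).mp hc₁ with rfl | rfl
    · obtain ⟨C, hCE, hC₂⟩ := hE₁corner (-c₂) (by rwa [abs_neg])
      obtain ⟨hCP, hC₁⟩ := hE₁.mem_iff.mp hCE
      exact ⟨-C, (hC C).mp hCP, by rw [dotQ_neg, hC₁, neg_neg], by rw [dotQ_neg, hC₂, neg_neg]⟩
    · obtain ⟨C, hCE, hC₂⟩ := hE₁corner c₂ hc₂
      exact ⟨C, (hE₁.mem_iff.mp hCE).1, (hE₁.mem_iff.mp hCE).2, hC₂⟩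
  have hparallel : ∀ {Eᵢ : Set Q2} {uᵢ : Z2}, IsEdge P Eᵢ uᵢ h →
      (latticeLength Eᵢ : ℤ) = h → (u = uᵢ ∨ u = -uᵢ) → False := by
    intro Eᵢ uᵢ hEᵢ hLᵢ hu
    obtain ⟨rfl, hL⟩ := hEᵢ.height_eq_and_latticeLength_eq_of_eq_or_eq_neg hC hE hu
    exact hndvd ⟨1, by rw [hL, hLᵢ, mul_one]⟩
  rcases hE.det₂_eq_zero_or_det₂_eq_zero hbound hcorner hd with h0 | h0
  · exact hparallel hE₂ hL₂
      (hE₂.1.eq_or_eq_neg_of_det₂_eq_zero hE.1 (by rw [det₂_swap, h0, neg_zero]))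
  · exact hparallel hE₁ hL₁ (hE₁.1.eq_or_eq_neg_of_det₂_eq_zero hE.1 h0)

end Edges

lemma eq_one_or_eq_two_of_mul_le {L₁ L₂ h₁ h₂ D : ℤ} (hD : 1 ≤ D) (hh₁ : 0 < h₁)
    (hL₁ : h₁ ≤ L₁) (hL₂ : h₂ ≤ L₂) (hk₁ : L₁ * D ≤ 2 * h₂) (hk₂ : L₂ * D ≤ 2 * h₁) :
    D = 1 ∨ D = 2 ∧ h₁ = h₂ ∧ L₁ = h₁ ∧ L₂ = h₁ := by
  have hD2 : D ≤ 2 := by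
    by_contra! hD3
    nlinarith [mul_le_mul_of_nonneg_left hD3.le (by omega : (0 : ℤ) ≤ L₁),
      mul_le_mul_of_nonneg_left hD3.le (by nlinarith : (0 : ℤ) ≤ L₂)]
  interval_cases D <;> omega

theorem stmt_8_general (P : Set Q2) (hC : CentSym P) (hR : HasRsing P)
    (E₁ E₂ : Set Q2) (u₁ u₂ : Z2) (h₁ h₂ : ℤ)
    (hE₁ : IsLongEdge P E₁ u₁ h₁) (hE₂ : IsLongEdge P E₂ u₂ h₂)
    (hne : u₂ ≠ u₁ ∧ u₂ ≠ -u₁) :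
    u₁.1 * u₂.2 - u₁.2 * u₂.1 = 1 ∨ u₁.1 * u₂.2 - u₁.2 * u₂.1 = -1 := by
  obtain ⟨hE₁, hL₁⟩ := hE₁
  obtain ⟨hE₂, hL₂⟩ := hE₂
  have hd : det₂ u₁ u₂ ≠ 0 := fun h0 =>
    (hE₁.1.eq_or_eq_neg_of_det₂_eq_zero hE₂.1 h0).elim hne.1 hne.2
  obtain ⟨A, hA, B, hB, hAB⟩ :=
    hE₁.exists_latticeLength_mul_abs_det₂_le (by have := hE₁.2.1; omega) u₂
  obtain ⟨A', hA', B', hB', hAB'⟩ :=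
    hE₂.exists_latticeLength_mul_abs_det₂_le (by have := hE₂.2.1; omega) u₁
  rw [det₂_swap, Int.cast_neg, abs_neg] at hAB'
  have hk₁ : (latticeLength E₁ : ℤ) * |det₂ u₁ u₂| ≤ 2 * h₂ := by
    exact_mod_cast
      hAB.trans (hE₂.abs_dotQ_sub_le hC (hE₁.mem_iff.mp hA).1 (hE₁.mem_iff.mp hB).1)
  have hk₂ : (latticeLength E₂ : ℤ) * |det₂ u₁ u₂| ≤ 2 * h₁ := by
    exact_mod_cast
      hAB'.trans (hE₁.abs_dotQ_sub_le hC (hE₂.mem_iff.mp hA').1 (hE₂.mem_iff.mp hB').1)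
  rcases eq_one_or_eq_two_of_mul_le (Int.one_le_abs hd) hE₁.2.1 hL₁ hL₂ hk₁ hk₂ with
    hd1 | ⟨hd2, rfl, hLh₁, hLh₂⟩
  · exact (abs_eq zero_le_one).mp hd1
  · refine absurd hR (hC.not_hasRsing_of_parallelogram hE₁ hE₂ hd hLh₁ hLh₂ hA hB ?_)
    have hLQ : (latticeLength E₁ : ℚ) = h₁ := by exact_mod_cast hLh₁
    have hdQ : |(det₂ u₁ u₂ : ℚ)| = 2 := by exact_mod_cast hd2
    rwa [hLQ, hdQ, mul_comm] at hAB

/-- For a centrally symmetric Fano polygon with non-empty basket of R-singularities and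
two pairs of opposite long edges with non-parallel primitive inner normals `u₁, u₂`, the
normals form a basis of the dual lattice: `det(u₁, u₂) = ±1`. -/
theorem stmt_8 (V : Finset Z2) (P : Set Q2) (hP : P = hull V)
    (hF : IsFanoPolygon V) (hC : CentSym P) (hR : HasRsing P)
    (E₁ E₂ : Set Q2) (u₁ u₂ : Z2) (h₁ h₂ : ℤ)
    (hE₁ : IsLongEdge P E₁ u₁ h₁) (hE₂ : IsLongEdge P E₂ u₂ h₂)
    (hne : u₂ ≠ u₁ ∧ u₂ ≠ -u₁) :
    u₁.1 * u₂.2 - u₁.2 * u₂.1 = 1 ∨ u₁.1 * u₂.2 - u₁.2 * u₂.1 = -1 :=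
  stmt_8_general P hC hR E₁ E₂ u₁ u₂ h₁ h₂ hE₁ hE₂ hne
end
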